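/- arXiv:2012.00960 — 7 statements merged into one kernel-verified Lean document; each statement's English description precedes it below -/
import Mathlib

section
/- Let f and g be nonnegative Lebesgue integrable functions on (0,∞) such that ∫₀^∞ f(x) e^{-sx} dx = ∫₀^∞ g(x) e^{-sx} dx for all s > 0. Then f = g almost everywhere on (0,∞). -/
/-!
Substituting `t = e^{-x}`, the hypothesis says that `F = f - g` satisfies
`∫₀^∞ F(x) e^{-x} p(e^{-x}) dx = 0` for every polynomial `p`, since `e^{-x} (e^{-x})^n = e^{-(n+1)x}`.
As `e^{-x} ∈ [0, 1]` on `(0, ∞)` and `F` is integrable, Weierstrass approximation extends this to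
every continuous `H` in place of `p`. Any compactly supported test function `ψ` is of the form
`ψ(x) = e^{-x} H(e^{-x})` with `H(t) = ψ(-log t) / t` continuous, so `F` vanishes as a distribution
on `(0, ∞)`, hence almost everywhere.
-/

open MeasureTheory Real Set Polynomial

section PolynomialApproximation

variable {α : Type*} [MeasurableSpace α] {μ : Measure α} {G φ : α → ℝ} {a b : ℝ} {H : ℝ → ℝ}

theorem MeasureTheory.Integrable.mul_comp_of_ae_mem_Icc (hG : Integrable G μ)
    (hφ : AEStronglyMeasurable φ μ) (hφab : ∀ᵐ x ∂μ, φ x ∈ Icc a b) (hH : Continuous H) :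
    Integrable (fun x => G x * H (φ x)) μ := by
  obtain ⟨C, hC⟩ := isCompact_Icc.exists_bound_of_continuousOn hH.continuousOn
  exact hG.mul_bdd (hH.comp_aestronglyMeasurable hφ) (hφab.mono fun x hx => hC _ hx)

theorem integral_mul_comp_eq_zero_of_forall_polynomial (hG : Integrable G μ)
    (hφ : AEStronglyMeasurable φ μ) (hφab : ∀ᵐ x ∂μ, φ x ∈ Icc a b)
    (hpoly : ∀ p : ℝ[X], ∫ x, G x * p.eval (φ x) ∂μ = 0) (hH : Continuous H) :
    ∫ x, G x * H (φ x) ∂μ = 0 := by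
  refine eq_of_forall_dist_le fun ε hε => ?_
  set C := ∫ x, ‖G x‖ ∂μ
  have hC : 0 ≤ C := integral_nonneg fun x => norm_nonneg _
  obtain ⟨p, hp⟩ := exists_polynomial_near_of_continuousOn a b H hH.continuousOn
    (ε / (C + 1)) (by positivity)
  have hdiff : ∫ x, G x * H (φ x) ∂μ = ∫ x, G x * (H (φ x) - p.eval (φ x)) ∂μ := by
    simp_rw [mul_sub]
    rw [integral_sub (hG.mul_comp_of_ae_mem_Icc hφ hφab hH)
      (hG.mul_comp_of_ae_mem_Icc hφ hφab p.continuous), hpoly p, sub_zero]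
  have hbound : ∀ᵐ x ∂μ, ‖G x * (H (φ x) - p.eval (φ x))‖ ≤ ε / (C + 1) * ‖G x‖ := by
    filter_upwards [hφab] with x hx
    rw [norm_mul, mul_comm, Real.norm_eq_abs (_ - _), abs_sub_comm]
    exact mul_le_mul_of_nonneg_right (hp _ hx).le (norm_nonneg _)
  calc dist (∫ x, G x * H (φ x) ∂μ) 0
      = ‖∫ x, G x * (H (φ x) - p.eval (φ x)) ∂μ‖ := by rw [dist_zero_right, hdiff]
    _ ≤ ∫ x, ε / (C + 1) * ‖G x‖ ∂μ := norm_integral_le_of_norm_le (hG.norm.const_mul _) hbound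
    _ = ε / (C + 1) * C := integral_const_mul _ _
    _ ≤ ε := by
      rw [div_mul_eq_mul_div, div_le_iff₀ (by positivity)]
      nlinarith

end PolynomialApproximation

section Laplace

variable {F : ℝ → ℝ}

theorem integrableOn_mul_exp_neg_mul (hF : IntegrableOn F (Ioi 0)) {s : ℝ} (hs : 0 ≤ s) :
    IntegrableOn (fun x => F x * exp (-s * x)) (Ioi 0) := by
  refine hF.mul_bdd (c := 1) (by fun_prop : Continuous fun x => exp (-s * x)).aestronglyMeasurable
    ((ae_restrict_iff' measurableSet_Ioi).2 (ae_of_all _ fun x (hx : 0 < x) => ?_))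
  rw [Real.norm_eq_abs, abs_of_pos (exp_pos _), exp_le_one_iff]
  nlinarith

theorem integrableOn_mul_exp_neg (hF : IntegrableOn F (Ioi 0)) :
    IntegrableOn (fun x => F x * exp (-x)) (Ioi 0) := by
  simpa using integrableOn_mul_exp_neg_mul hF zero_le_one

theorem ae_restrict_Ioi_exp_neg_mem_Icc : ∀ᵐ x ∂volume.restrict (Ioi 0), exp (-x) ∈ Icc 0 1 :=
  (ae_restrict_iff' measurableSet_Ioi).2 (ae_of_all _ fun x (hx : 0 < x) =>
    ⟨(exp_pos _).le, exp_le_one_iff.2 (by linarith)⟩)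

theorem integral_mul_exp_neg_mul_eval_exp_neg_eq_zero (hF : IntegrableOn F (Ioi 0))
    (h : ∀ s, 0 < s → ∫ x in Ioi 0, F x * exp (-s * x) = 0) (p : ℝ[X]) :
    ∫ x in Ioi 0, F x * exp (-x) * p.eval (exp (-x)) = 0 := by
  induction p using Polynomial.induction_on' with
  | add p q hp hq =>
    have hI (r : ℝ[X]) : IntegrableOn (fun x => F x * exp (-x) * r.eval (exp (-x))) (Ioi 0) :=
      (integrableOn_mul_exp_neg hF).mul_comp_of_ae_mem_Icc
        (by fun_prop : Continuous fun x => exp (-x)).aestronglyMeasurable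
        ae_restrict_Ioi_exp_neg_mem_Icc r.continuous
    simp_rw [eval_add, mul_add]
    rw [integral_add (hI p) (hI q), hp, hq, add_zero]
  | monomial n a =>
    have hmono : ∀ x, F x * exp (-x) * eval (exp (-x)) (monomial n a)
        = a * (F x * exp (-(n + 1 : ℝ) * x)) := by
      intro x
      rw [eval_monomial, ← exp_nat_mul, mul_comm a, ← mul_assoc, mul_assoc (F x), ← exp_add]
      ring_nf
    simp_rw [hmono, integral_const_mul, h (n + 1) (by positivity), mul_zero]

theorem continuous_comp_neg_log_div_self {ψ : ℝ → ℝ} (hψ : Continuous ψ)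
    (hψc : HasCompactSupport ψ) : Continuous fun t => ψ (-log t) / t := by
  obtain ⟨R, hR⟩ := hψc.isCompact.bddAbove
  have hvanish : ∀ y, R < y → ψ y = 0 := fun y hy =>
    image_eq_zero_of_notMem_tsupport fun hy' => (hR hy').not_gt hy
  refine continuous_iff_continuousAt.2 fun t => ?_
  rcases eq_or_ne t 0 with rfl | ht
  · -- near `0`, `-log t` lies beyond the support of `ψ`; at `t = 0` itself, `x / 0 = 0`
    refine (continuousAt_const (y := (0 : ℝ))).congr ?_
    filter_upwards [Metric.ball_mem_nhds (0 : ℝ) (exp_pos (-R))] with t' ht'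
    rw [Metric.mem_ball, dist_zero_right, Real.norm_eq_abs] at ht'
    rcases eq_or_ne t' 0 with rfl | ht'0
    · simp
    · rw [hvanish, zero_div]
      rw [← log_abs, lt_neg]
      exact (log_lt_iff_lt_exp (abs_pos.2 ht'0)).2 ht'
  · exact (hψ.continuousAt.comp (continuousAt_log ht).neg).div continuousAt_id ht

theorem ae_eq_zero_of_laplace_eq_zero (hF : IntegrableOn F (Ioi 0))
    (h : ∀ s, 0 < s → ∫ x in Ioi 0, F x * exp (-s * x) = 0) :
    F =ᵐ[volume.restrict (Ioi 0)] 0 := by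
  refine ae_eq_zero_of_integral_contDiff_smul_eq_zero hF.locallyIntegrable fun ψ hψ hψc => ?_
  have hH := integral_mul_comp_eq_zero_of_forall_polynomial (integrableOn_mul_exp_neg hF)
    (by fun_prop : Continuous fun x => exp (-x)).aestronglyMeasurable
    ae_restrict_Ioi_exp_neg_mem_Icc (integral_mul_exp_neg_mul_eval_exp_neg_eq_zero hF h)
    (continuous_comp_neg_log_div_self hψ.continuous hψc)
  refine Eq.trans (integral_congr_ae (ae_of_all _ fun x => ?_)) hH
  simp only [smul_eq_mul, log_exp, neg_neg]
  field_simp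

end Laplace

theorem laplace_eq_of_nonneg_integrable_general
    (f g : ℝ → ℝ)
    (hf : IntegrableOn f (Ioi (0:ℝ))) (hg : IntegrableOn g (Ioi (0:ℝ)))
    (h : ∀ s : ℝ, 0 < s →
      ∫ x in Ioi (0:ℝ), f x * Real.exp (-s * x)
        = ∫ x in Ioi (0:ℝ), g x * Real.exp (-s * x)) :
    f =ᵐ[volume.restrict (Ioi (0:ℝ))] g := by
  have hsub : ∀ s : ℝ, 0 < s → ∫ x in Ioi 0, (f - g) x * exp (-s * x) = 0 := fun s hs => by
    simp_rw [Pi.sub_apply, sub_mul]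
    rw [integral_sub (integrableOn_mul_exp_neg_mul hf hs.le)
      (integrableOn_mul_exp_neg_mul hg hs.le), h s hs, sub_self]
  filter_upwards [ae_eq_zero_of_laplace_eq_zero (hf.sub hg) hsub] with x hx
  exact sub_eq_zero.mp hx

theorem laplace_eq_of_nonneg_integrable
    (f g : ℝ → ℝ)
    (hf : IntegrableOn f (Ioi (0:ℝ))) (hg : IntegrableOn g (Ioi (0:ℝ)))
    (hf0 : ∀ x ∈ Ioi (0:ℝ), 0 ≤ f x) (hg0 : ∀ x ∈ Ioi (0:ℝ), 0 ≤ g x)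
    (h : ∀ s : ℝ, 0 < s →
      ∫ x in Ioi (0:ℝ), f x * Real.exp (-s * x)
        = ∫ x in Ioi (0:ℝ), g x * Real.exp (-s * x)) :
    f =ᵐ[volume.restrict (Ioi (0:ℝ))] g :=
  laplace_eq_of_nonneg_integrable_general f g hf hg h
end

section
/- Let f be a Lebesgue integrable function on (0,∞) such that ∫₀^∞ f(x) e^{-sx} dx = 0 for all s > 0. Then f = 0 almost everywhere on (0,∞). -/
/-!
Substituting `t = e^{-x}`, the hypothesis says that `∫ G(e^{-x}) f(x) dx = 0` for every polynomial
`G` with `G(0) = 0`, these being the combinations of the `e^{-nx}`, `n ≥ 1`. By Weierstrass such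
polynomials are uniformly dense among the continuous `G` on `[0, 1]` with `G(0) = 0`, and `f` is
integrable, so the identity extends to all of them. A smooth `g` with compact support in `(0, ∞)`
is of the form `x ↦ G(e^{-x})` with `G(t) = g(-log t)`, hence `f` integrates to zero against every
test function on `(0, ∞)` and vanishes almost everywhere there.
-/

open MeasureTheory Real Set Filter Topology Polynomial

/- Since `log 0 = 0`, `-log t` jumps from `+∞` to `0` at `t = 0`: hence the limit `g 0` at `+∞`. -/
theorem continuous_comp_neg_log {α : Type*} [TopologicalSpace α] {g : ℝ → α} (hg : Continuous g)
    (hg_top : Tendsto g atTop (𝓝 (g 0))) : Continuous fun t => g (-log t) := by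
  refine continuous_iff_continuousAt.2 fun t => ?_
  rcases eq_or_ne t 0 with rfl | ht
  · rw [← continuousWithinAt_compl_self, ContinuousWithinAt, log_zero, neg_zero]
    exact hg_top.comp (tendsto_neg_atBot_atTop.comp tendsto_log_nhdsNE_zero)
  · exact hg.continuousAt.comp (continuousAt_log ht).neg

theorem exp_neg_mem_Icc {x : ℝ} (hx : 0 ≤ x) : exp (-x) ∈ Icc (0 : ℝ) 1 :=
  ⟨(exp_pos _).le, exp_le_one_iff.2 (neg_nonpos.2 hx)⟩

theorem exists_X_mul_polynomial_near_of_continuousOn {G : ℝ → ℝ}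
    (hG : ContinuousOn G (Icc 0 1)) (hG0 : G 0 = 0) {ε : ℝ} (hε : 0 < ε) :
    ∃ p : ℝ[X], ∀ t ∈ Icc (0 : ℝ) 1, |G t - (X * p).eval t| < ε := by
  obtain ⟨p, hp⟩ := exists_polynomial_near_of_continuousOn 0 1 G hG (ε / 2) (half_pos hε)
  have hp0 : |p.eval 0| < ε / 2 := by simpa [hG0] using hp 0 (left_mem_Icc.2 zero_le_one)
  refine ⟨p.divX, fun t ht => ?_⟩
  have hdivX : (X * p.divX).eval t = p.eval t - p.eval 0 := by
    conv_rhs => rw [← X_mul_divX_add p]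
    simp [coeff_zero_eq_eval_zero]
  calc |G t - (X * p.divX).eval t| = |(G t - p.eval t) + p.eval 0| := by rw [hdivX]; ring_nf
    _ ≤ |p.eval t - G t| + |p.eval 0| := by rw [abs_sub_comm]; exact abs_add_le _ _
    _ < ε / 2 + ε / 2 := add_lt_add (hp t ht) hp0
    _ = ε := add_halves ε

section

variable {f : ℝ → ℝ}

theorem MeasureTheory.IntegrableOn.comp_exp_neg_mul (hf : IntegrableOn f (Ioi 0)) {G : ℝ → ℝ}
    (hG : Continuous G) : IntegrableOn (fun x => G (exp (-x)) * f x) (Ioi 0) := by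
  obtain ⟨C, hC⟩ := (isCompact_Icc (a := (0 : ℝ)) (b := 1)).exists_bound_of_continuousOn
    hG.continuousOn
  refine hf.bdd_mul (c := C) (hG.comp (continuous_exp.comp continuous_neg)).aestronglyMeasurable ?_
  filter_upwards [self_mem_ae_restrict measurableSet_Ioi] with x hx
  exact hC _ (exp_neg_mem_Icc (hx.le))

theorem integral_X_mul_polynomial_exp_neg_mul_eq_zero (hf : IntegrableOn f (Ioi 0))
    (h : ∀ n : ℕ, ∫ x in Ioi 0, f x * exp (-(n + 1) * x) = 0) (p : ℝ[X]) :
    ∫ x in Ioi 0, (X * p).eval (exp (-x)) * f x = 0 := by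
  induction p using Polynomial.induction_on' with
  | monomial n a =>
    have hmono : ∀ x,
        (X * monomial n a).eval (exp (-x)) * f x = a * (f x * exp (-(n + 1) * x)) := fun x => by
      rw [eval_mul, eval_X, eval_monomial, ← exp_nat_mul, mul_left_comm, ← exp_add]
      ring_nf
    simp only [hmono, integral_const_mul, h n, mul_zero]
  | add p q hp hq =>
    simp only [mul_add, eval_add, add_mul]
    rw [integral_add, hp, hq, add_zero]
    exacts [hf.comp_exp_neg_mul (X * p).continuous, hf.comp_exp_neg_mul (X * q).continuous]

theorem integral_comp_exp_neg_mul_eq_zero (hf : IntegrableOn f (Ioi 0))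
    (h : ∀ n : ℕ, ∫ x in Ioi 0, f x * exp (-(n + 1) * x) = 0) {G : ℝ → ℝ}
    (hG : Continuous G) (hG0 : G 0 = 0) :
    ∫ x in Ioi 0, G (exp (-x)) * f x = 0 := by
  set I := ∫ x in Ioi 0, G (exp (-x)) * f x
  suffices hI : ∀ ε > 0, |I| ≤ ε * ∫ x in Ioi 0, |f x| by
    have hlim : Tendsto (fun ε => ε * ∫ x in Ioi 0, |f x|) (𝓝[>] 0) (𝓝 0) := by
      simpa using (tendsto_nhdsWithin_of_tendsto_nhds (a := (0 : ℝ)) (s := Ioi 0)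
        tendsto_id).mul_const (∫ x in Ioi 0, |f x|)
    exact abs_nonpos_iff.1 (ge_of_tendsto hlim (eventually_nhdsWithin_of_forall hI))
  intro ε hε
  obtain ⟨p, hp⟩ := exists_X_mul_polynomial_near_of_continuousOn hG.continuousOn hG0 hε
  have hsplit : I = ∫ x in Ioi 0, (G (exp (-x)) - (X * p).eval (exp (-x))) * f x := calc
    I = ∫ x in Ioi 0, ((G (exp (-x)) - (X * p).eval (exp (-x))) * f x
          + (X * p).eval (exp (-x)) * f x) := by simp only [sub_mul, sub_add_cancel, I]
    _ = _ := by
      rw [integral_add, integral_X_mul_polynomial_exp_neg_mul_eq_zero hf h p, add_zero]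
      exacts [hf.comp_exp_neg_mul (hG.sub (X * p).continuous),
        hf.comp_exp_neg_mul (X * p).continuous]
  rw [hsplit, ← integral_const_mul, ← Real.norm_eq_abs]
  refine norm_integral_le_of_norm_le (hf.abs.const_mul ε) ?_
  filter_upwards [self_mem_ae_restrict measurableSet_Ioi] with x hx
  rw [norm_mul, Real.norm_eq_abs, Real.norm_eq_abs]
  exact mul_le_mul_of_nonneg_right (hp _ (exp_neg_mem_Icc (hx.le))).le (abs_nonneg _)

end

theorem laplace_zero_of_integrable
    (f : ℝ → ℝ) (hf : IntegrableOn f (Ioi (0:ℝ)))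
    (h : ∀ s : ℝ, 0 < s → ∫ x in Ioi (0:ℝ), f x * Real.exp (-s * x) = 0) :
    f =ᵐ[volume.restrict (Ioi (0:ℝ))] 0 := by
  rw [EventuallyEq, ae_restrict_iff' measurableSet_Ioi]
  refine isOpen_Ioi.ae_eq_zero_of_integral_contDiff_smul_eq_zero hf.locallyIntegrableOn
    fun g hg hgc hgU => ?_
  have hg0 : g 0 = 0 := image_eq_zero_of_notMem_tsupport fun h0 => lt_irrefl (0 : ℝ) (hgU h0)
  have hg_top : Tendsto g atTop (𝓝 (g 0)) := by
    simpa [hg0] using hgc.is_zero_at_infty.mono_left atTop_le_cocompact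
  have hzero := integral_comp_exp_neg_mul_eq_zero hf (fun n => h _ n.cast_add_one_pos)
    (continuous_comp_neg_log hg.continuous hg_top) (by simp [hg0])
  rw [← setIntegral_eq_integral_of_forall_compl_eq_zero fun x hx => ?_]
  · simpa [log_exp] using hzero
  · rw [image_eq_zero_of_notMem_tsupport (mt (@hgU x) hx), zero_smul]
end

section
/- Let (λ_k) be a sequence of strictly increasing positive real numbers tending to infinity with ∑ 1/λ_k = ∞, and let q > 0 with q ∉ {λ_k}. Then for every ε > 0 there is a finite linear combination P of the monomials x^{λ_1}, ..., x^{λ_n} such that sup_{x ∈ [0,1]} |x^q - P(x)| ≤ ∏_{k=1}^n |1 - q/λ_k| < ε. -/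
open MeasureTheory Real Set Filter

/-!
For `λ > 0` let `T_λ f (x) = x^λ ∫_x^1 f(t) t^(-λ-1) dt` (this is `muntzOp λ f x`), a right
inverse of `λ - x d/dx`; it maps `x^μ` to `(x^λ - x^μ) / (μ - λ)` for `μ ≠ λ`, and
`|T_λ f| ≤ ‖f‖_∞ / λ` on `[0, 1]`. Hence if `E = x^q - P` is the error of an approximation by the
monomials `x^(λ_k)`, then `(λ - q) T_λ E` is the error of an approximation by those monomials and
`x^λ`, with sup norm at most `|1 - q/λ| ‖E‖_∞`. Iterating from `E = x^q` gives the bound by the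
product, and `|1 - q/λ_k| ≤ exp (-q/λ_k)` for large `k` makes the product tend to `0` because
`∑ 1/λ_k` diverges.
-/

theorem continuousOn_rpow_const_uIcc {x : ℝ} (hx : 0 < x) (r : ℝ) :
    ContinuousOn (fun t : ℝ => t ^ r) (uIcc x 1) :=
  continuousOn_id.rpow_const fun _ ht => .inl (lt_min hx one_pos |>.trans_le ht.1).ne'

theorem integral_rpow_sub_one_of_pos {x μ : ℝ} (hx : 0 < x) (hμ : μ ≠ 0) :
    ∫ t in x..1, t ^ (μ - 1) = (1 - x ^ μ) / μ := by
  have h0 : (0 : ℝ) ∉ uIcc x 1 := fun h => (lt_min hx one_pos).not_ge h.1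
  rw [integral_rpow (.inr ⟨by simpa using hμ, h0⟩), sub_add_cancel, one_rpow]

noncomputable def muntzOp (lam : ℝ) (f : ℝ → ℝ) (x : ℝ) : ℝ :=
  x ^ lam * ∫ t in x..1, f t * t ^ (-lam - 1)

section muntzOp

variable {lam x : ℝ}

theorem muntzOp_rpow {μ : ℝ} (hx : 0 < x) (hμ : μ ≠ lam) :
    muntzOp lam (fun t => t ^ μ) x = (x ^ lam - x ^ μ) / (μ - lam) := by
  have hint : ∫ t in x..1, t ^ μ * t ^ (-lam - 1) = ∫ t in x..1, t ^ (μ - lam - 1) := by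
    refine intervalIntegral.integral_congr fun t ht => ?_
    rw [← rpow_add (lt_of_lt_of_le (lt_min hx one_pos) ht.1)]
    ring_nf
  rw [muntzOp, hint, integral_rpow_sub_one_of_pos hx (sub_ne_zero.2 hμ), mul_div_assoc',
    mul_sub, mul_one, ← rpow_add hx, add_sub_cancel]

theorem muntzOp_rpow_sub_sum {ι : Type*} {s : Finset ι} {l a : ι → ℝ} {q : ℝ} (hx : 0 < x)
    (hq : q ≠ lam) (hl : ∀ k ∈ s, l k ≠ lam) :
    muntzOp lam (fun t => t ^ q - ∑ k ∈ s, a k * t ^ l k) x =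
      (x ^ lam - x ^ q) / (q - lam) - ∑ k ∈ s, a k * ((x ^ lam - x ^ l k) / (l k - lam)) := by
  have hint (μ : ℝ) : IntervalIntegrable (fun t => t ^ μ * t ^ (-lam - 1)) volume x 1 :=
    ((continuousOn_rpow_const_uIcc hx μ).mul
      (continuousOn_rpow_const_uIcc hx _)).intervalIntegrable
  calc muntzOp lam (fun t => t ^ q - ∑ k ∈ s, a k * t ^ l k) x
      = muntzOp lam (fun t => t ^ q) x - ∑ k ∈ s, a k * muntzOp lam (fun t => t ^ l k) x := by
        have hsum : IntervalIntegrable (fun t => ∑ k ∈ s, a k * (t ^ l k * t ^ (-lam - 1)))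
            volume x 1 := by
          simpa only [Finset.sum_fn] using
            IntervalIntegrable.sum s fun k _ => (hint (l k)).const_mul (a k)
        simp only [muntzOp, sub_mul, Finset.sum_mul, mul_assoc]
        rw [intervalIntegral.integral_sub (hint q) hsum,
          intervalIntegral.integral_finsetSum fun k _ => (hint (l k)).const_mul (a k)]
        simp only [intervalIntegral.integral_const_mul, mul_sub, Finset.mul_sum]
        ring_nf
    _ = _ := by
        rw [muntzOp_rpow hx hq]
        exact congrArg _ (Finset.sum_congr rfl fun k hk => by rw [muntzOp_rpow hx (hl k hk)])

theorem abs_muntzOp_le {f : ℝ → ℝ} {C : ℝ} (hlam : 0 < lam) (hx : x ∈ Ioc 0 1)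
    (hf : IntervalIntegrable f volume x 1) (hC : ∀ t ∈ Icc x 1, |f t| ≤ C) :
    |muntzOp lam f x| ≤ C * (1 - x ^ lam) / lam := by
  obtain ⟨hx0, hx1⟩ := hx
  have hpos : ∀ t ∈ Icc x 1, 0 < t := fun t ht => hx0.trans_le ht.1
  have hcont := continuousOn_rpow_const_uIcc hx0 (-lam - 1)
  have hint : |∫ t in x..1, f t * t ^ (-lam - 1)| ≤ C * ((1 - x ^ (-lam)) / -lam) := by
    calc |∫ t in x..1, f t * t ^ (-lam - 1)|
        ≤ ∫ t in x..1, |f t * t ^ (-lam - 1)| := intervalIntegral.abs_integral_le_integral_abs hx1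
      _ ≤ ∫ t in x..1, C * t ^ (-lam - 1) := by
          refine intervalIntegral.integral_mono_on hx1 (hf.mul_continuousOn hcont).abs
            (hcont.intervalIntegrable.const_mul C) fun t ht => ?_
          rw [abs_mul, abs_of_nonneg (rpow_nonneg (hpos t ht).le _)]
          exact mul_le_mul_of_nonneg_right (hC t ht) (rpow_nonneg (hpos t ht).le _)
      _ = C * ((1 - x ^ (-lam)) / -lam) := by
          rw [intervalIntegral.integral_const_mul,
            integral_rpow_sub_one_of_pos hx0 (neg_ne_zero.2 hlam.ne')]
  have hxlam : x ^ lam * x ^ (-lam) = 1 := by rw [← rpow_add hx0, add_neg_cancel, rpow_zero]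
  rw [muntzOp, abs_mul, abs_of_nonneg (rpow_nonneg hx0.le _)]
  calc x ^ lam * |∫ t in x..1, f t * t ^ (-lam - 1)|
      ≤ x ^ lam * (C * ((1 - x ^ (-lam)) / -lam)) := by gcongr
    _ = C * (1 - x ^ lam) / lam := by
        field_simp
        linear_combination C * hxlam

end muntzOp

theorem sub_mul_muntzOp_rpow_sub_sum {ι : Type*} {s : Finset ι} {l a : ι → ℝ} {q lam x : ℝ}
    (hx : 0 < x) (hqlam : q ≠ lam) (hlne : ∀ k ∈ s, l k ≠ lam) :
    (lam - q) * muntzOp lam (fun t => t ^ q - ∑ k ∈ s, a k * t ^ l k) x =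
      x ^ q - ((1 - ∑ k ∈ s, a k * ((q - lam) / (l k - lam))) * x ^ lam +
        ∑ k ∈ s, a k * ((q - lam) / (l k - lam)) * x ^ l k) := by
  have hterm : ∀ k ∈ s, (lam - q) * (a k * ((x ^ lam - x ^ l k) / (l k - lam))) =
      a k * ((q - lam) / (l k - lam)) * x ^ l k -
        a k * ((q - lam) / (l k - lam)) * x ^ lam := fun k hk => by
    have := sub_ne_zero.2 (hlne k hk)
    field_simp
    ring
  have hqlam' := sub_ne_zero.2 hqlam
  rw [muntzOp_rpow_sub_sum hx hqlam hlne, mul_sub, Finset.mul_sum, Finset.sum_congr rfl hterm,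
    Finset.sum_sub_distrib, ← Finset.sum_mul]
  field_simp
  ring

theorem exists_rpow_approx_insert {ι : Type*} {s : Finset ι} {l a : ι → ℝ} {q lam C : ℝ}
    (hq : 0 < q) (hlam : 0 < lam) (hqlam : q ≠ lam) (hlpos : ∀ k ∈ s, 0 < l k)
    (hlne : ∀ k ∈ s, l k ≠ lam) (ha : ∀ x ∈ Icc (0 : ℝ) 1, |x ^ q - ∑ k ∈ s, a k * x ^ l k| ≤ C) :
    ∃ (c : ℝ) (b : ι → ℝ), ∀ x ∈ Icc (0 : ℝ) 1,
      |x ^ q - (c * x ^ lam + ∑ k ∈ s, b k * x ^ l k)| ≤ C * |1 - q / lam| := by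
  set d : ι → ℝ := fun k => (q - lam) / (l k - lam)
  refine ⟨1 - ∑ k ∈ s, a k * d k, fun k => a k * d k, fun x hx => ?_⟩
  have hC : 0 ≤ C := (abs_nonneg _).trans (ha 0 ⟨le_rfl, zero_le_one⟩)
  rcases hx.1.eq_or_lt with rfl | hx0
  · have hsum : ∑ k ∈ s, a k * d k * (0 : ℝ) ^ l k = 0 :=
      Finset.sum_eq_zero fun k hk => by rw [zero_rpow (hlpos k hk).ne', mul_zero]
    rw [hsum, zero_rpow hq.ne', zero_rpow hlam.ne', mul_zero, zero_add, sub_zero, abs_zero]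
    positivity
  have hf : IntervalIntegrable (fun t => t ^ q - ∑ k ∈ s, a k * t ^ l k) volume x 1 :=
    ((continuousOn_rpow_const_uIcc hx0 q).sub (continuousOn_finsetSum s fun k _ =>
      continuousOn_const.mul (continuousOn_rpow_const_uIcc hx0 (l k)))).intervalIntegrable
  have hbound := abs_muntzOp_le hlam ⟨hx0, hx.2⟩ hf fun t ht => ha t ⟨hx0.le.trans ht.1, ht.2⟩
  have hx_lam : 0 ≤ x ^ lam := rpow_nonneg hx0.le _
  have hratio : |1 - q / lam| = |lam - q| / lam := by
    rw [← abs_of_pos hlam, ← abs_div, abs_of_pos hlam, sub_div, div_self hlam.ne']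
  rw [← sub_mul_muntzOp_rpow_sub_sum hx0 hqlam hlne, abs_mul, hratio]
  calc |lam - q| * |muntzOp lam (fun t => t ^ q - ∑ k ∈ s, a k * t ^ l k) x|
      ≤ |lam - q| * (C * (1 - x ^ lam) / lam) := by gcongr
    _ = C * (|lam - q| / lam) * (1 - x ^ lam) := by ring
    _ ≤ C * (|lam - q| / lam) := mul_le_of_le_one_right (by positivity) (by linarith)

theorem exists_rpow_approx {l : ℕ → ℝ} {q : ℝ} (hpos : ∀ k, 0 < l k) (hl : Function.Injective l)
    (hq : 0 < q) (hqn : ∀ k, q ≠ l k) (n : ℕ) :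
    ∃ a : ℕ → ℝ, ∀ x ∈ Icc (0 : ℝ) 1,
      |x ^ q - ∑ k ∈ Finset.range n, a k * x ^ l k| ≤ ∏ k ∈ Finset.range n, |1 - q / l k| := by
  induction n with
  | zero =>
    refine ⟨0, fun x hx => ?_⟩
    simpa [abs_of_nonneg (rpow_nonneg hx.1 q)] using rpow_le_one hx.1 hx.2 hq.le
  | succ n ih =>
    obtain ⟨a, ha⟩ := ih
    obtain ⟨c, b, hb⟩ := exists_rpow_approx_insert hq (hpos n) (hqn n) (fun k _ => hpos k)
      (fun k hk => hl.ne (Finset.mem_range.1 hk).ne) ha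
    refine ⟨Function.update b n c, fun x hx => ?_⟩
    have hsum : ∑ k ∈ Finset.range (n + 1), Function.update b n c k * x ^ l k =
        c * x ^ l n + ∑ k ∈ Finset.range n, b k * x ^ l k := by
      rw [Finset.sum_range_succ, Function.update_self, add_comm]
      exact congrArg _ (Finset.sum_congr rfl fun k hk => by
        rw [Function.update_of_ne (Finset.mem_range.1 hk).ne])
    rw [hsum, Finset.prod_range_succ]
    exact hb x hx

open Finset in
theorem prod_abs_one_sub_le_exp_neg_sum {ι : Type*} {s : Finset ι} {u : ι → ℝ}
    (hu : ∀ k ∈ s, u k ≤ 1) : ∏ k ∈ s, |1 - u k| ≤ exp (-∑ k ∈ s, u k) := by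
  rw [← sum_neg_distrib, exp_sum]
  refine prod_le_prod (fun k _ => abs_nonneg _) fun k hk => ?_
  rw [abs_of_nonneg (sub_nonneg.2 (hu k hk))]
  exact one_sub_le_exp_neg _

open Finset in
theorem tendsto_prod_abs_one_sub_atTop_zero {u : ℕ → ℝ} (hu : ∀ᶠ k in atTop, u k ≤ 1)
    (hsum : Tendsto (fun n => ∑ k ∈ range n, u k) atTop atTop) :
    Tendsto (fun n => ∏ k ∈ range n, |1 - u k|) atTop (nhds 0) := by
  obtain ⟨N, hN⟩ := eventually_atTop.1 hu
  set P := ∏ k ∈ range N, |1 - u k|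
  have hbound : ∀ n ≥ N, ∏ k ∈ range n, |1 - u k| ≤
      P * exp (-(∑ k ∈ range n, u k - ∑ k ∈ range N, u k)) := by
    intro n hn
    rw [← prod_range_mul_prod_Ico _ hn, ← sum_Ico_eq_sub _ hn]
    exact mul_le_mul_of_nonneg_left
      (prod_abs_one_sub_le_exp_neg_sum fun k hk => hN k (mem_Ico.1 hk).1)
      (prod_nonneg fun k _ => abs_nonneg _)
  have hlim : Tendsto (fun n => P * exp (-(∑ k ∈ range n, u k - ∑ k ∈ range N, u k)))
      atTop (nhds 0) := by
    simpa [sub_eq_add_neg] using (tendsto_exp_atBot.comp (tendsto_neg_atTop_atBot.comp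
      (tendsto_atTop_add_const_right _ (-∑ k ∈ range N, u k) hsum))).const_mul P
  exact squeeze_zero' (.of_forall fun n => prod_nonneg fun k _ => abs_nonneg _)
    (eventually_atTop.2 ⟨N, hbound⟩) hlim

theorem muntz_approx_monomial
    (l : ℕ → ℝ) (hpos : ∀ k, 0 < l k) (hmono : StrictMono l)
    (htop : Tendsto l atTop atTop)
    (hdiv : ¬ Summable (fun k => 1 / l k))
    (q : ℝ) (hq : 0 < q) (hqn : ∀ k, q ≠ l k) :
    ∀ ε : ℝ, 0 < ε →
      ∃ (n : ℕ) (a : ℕ → ℝ),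
        (∀ x ∈ Icc (0:ℝ) 1,
          |x ^ q - ∑ k ∈ Finset.range n, a k * x ^ (l k)| ≤
            ∏ k ∈ Finset.range n, |1 - q / l k|) ∧
        ∏ k ∈ Finset.range n, |1 - q / l k| < ε := by
  intro ε hε
  have hsmall : ∀ᶠ k in atTop, q / l k ≤ 1 :=
    (htop.eventually_ge_atTop q).mono fun k hk => div_le_one_of_le₀ hk (hpos k).le
  have hsum : Tendsto (fun n => ∑ k ∈ Finset.range n, q / l k) atTop atTop := by
    have h := ((not_summable_iff_tendsto_nat_atTop_of_nonneg fun k =>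
      one_div_nonneg.2 (hpos k).le).1 hdiv).const_mul_atTop hq
    simpa only [Finset.mul_sum, mul_one_div] using h
  obtain ⟨n, hn⟩ := ((tendsto_prod_abs_one_sub_atTop_zero hsmall hsum).eventually
    (gt_mem_nhds hε)).exists
  obtain ⟨a, ha⟩ := exists_rpow_approx hpos hmono.injective hq hqn n
  exact ⟨n, a, ha, hn⟩
end

section
/- Let f and g be measurable functions on (0,∞) and (n_j) a strictly increasing sequence of positive reals with ∑ 1/n_j = ∞. If for all j the integrals ∫₀^∞ f(x)e^{-n_j x}dx and ∫₀^∞ g(x)e^{-n_j x}dx are finite and equal, then f = g almost everywhere on (0,∞). -/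
/-!
Put `φ = (f - g) e^{-n₀ x}`, an integrable function on `(0, ∞)`. Its Laplace transform is
holomorphic on the open right half-plane, continuous and bounded by `‖φ‖₁` on the closed one, and
vanishes at the points `aⱼ = n_{j+1} - n₀ > 0`. Dividing out finitely many Blaschke factors
`(w - aⱼ) / (w + aⱼ)` preserves the bound (Phragmén–Lindelöf), so at `u > 0` the transform is at
most `‖φ‖₁ ∏ |u - aⱼ| / (u + aⱼ)`, which tends to `0` because `∑ 1 / aⱼ = ∞`. Hence
`∫ φ(x) e^{-ux} dx = 0` for all `u > 0`. Then `φ(x) e^{-x}` integrates to zero against every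
polynomial in `e^{-x}`, hence (Weierstrass) against every continuous function of `e^{-x}`, and
every compactly supported test function is of this form, so `φ = 0` almost everywhere.
-/

open MeasureTheory Real Set Filter Topology
open scoped ComplexConjugate

noncomputable def laplaceTransform (φ : ℝ → ℝ) (w : ℂ) : ℂ :=
  ∫ x in Ioi (0:ℝ), (φ x : ℂ) * Complex.exp (-w * x)

section LaplaceTransform

variable {φ : ℝ → ℝ}

theorem aestronglyMeasurable_ofReal_mul {μ : Measure ℝ} (hφ : AEStronglyMeasurable φ μ)
    {ψ : ℝ → ℂ} (hψ : Continuous ψ) : AEStronglyMeasurable (fun x => (φ x : ℂ) * ψ x) μ :=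
  (Complex.continuous_ofReal.comp_aestronglyMeasurable hφ).mul hψ.aestronglyMeasurable

theorem aestronglyMeasurable_laplace_integrand (hφ : IntegrableOn φ (Ioi 0)) (w : ℂ) :
    AEStronglyMeasurable (fun x : ℝ => (φ x : ℂ) * Complex.exp (-w * x))
      (volume.restrict (Ioi 0)) :=
  aestronglyMeasurable_ofReal_mul hφ.aestronglyMeasurable (by fun_prop)

theorem ae_norm_laplace_integrand_le {w : ℂ} (hw : 0 ≤ w.re) :
    ∀ᵐ x ∂volume.restrict (Ioi (0:ℝ)), ‖(φ x : ℂ) * Complex.exp (-w * x)‖ ≤ ‖φ x‖ :=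
  (ae_restrict_iff' measurableSet_Ioi).2 <| .of_forall fun x (hx : 0 < x) => by
    simpa [Complex.norm_exp] using
      mul_le_of_le_one_right (abs_nonneg (φ x)) (exp_le_one_iff.2 (by nlinarith))

theorem integrableOn_laplace_integrand (hφ : IntegrableOn φ (Ioi 0)) {w : ℂ} (hw : 0 ≤ w.re) :
    IntegrableOn (fun x : ℝ => (φ x : ℂ) * Complex.exp (-w * x)) (Ioi 0) :=
  hφ.norm.mono' (aestronglyMeasurable_laplace_integrand hφ w) (ae_norm_laplace_integrand_le hw)

theorem norm_laplaceTransform_le (hφ : IntegrableOn φ (Ioi 0)) {w : ℂ} (hw : 0 ≤ w.re) :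
    ‖laplaceTransform φ w‖ ≤ ∫ x in Ioi (0:ℝ), |φ x| :=
  norm_integral_le_of_norm_le hφ.norm (ae_norm_laplace_integrand_le hw)

theorem laplaceTransform_ofReal (φ : ℝ → ℝ) (u : ℝ) :
    laplaceTransform φ u = ((∫ x in Ioi (0:ℝ), φ x * rexp (-u * x) : ℝ) : ℂ) := by
  rw [laplaceTransform, ← integral_complex_ofReal]
  push_cast
  rfl

theorem continuousOn_laplaceTransform (hφ : IntegrableOn φ (Ioi 0)) :
    ContinuousOn (laplaceTransform φ) {w | 0 ≤ w.re} :=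
  continuousOn_of_dominated (fun w _ => aestronglyMeasurable_laplace_integrand hφ w)
    (fun _ hw => ae_norm_laplace_integrand_le hw) hφ.norm
    (.of_forall fun _ => by fun_prop)

theorem exp_neg_mul_mul_le {δ : ℝ} (hδ : 0 < δ) (x : ℝ) : rexp (-(δ * x)) * x ≤ δ⁻¹ := by
  rw [exp_neg, inv_mul_eq_div, div_le_iff₀ (exp_pos _), ← div_eq_inv_mul, le_div_iff₀ hδ]
  linarith [add_one_le_exp (δ * x)]

theorem differentiableOn_laplaceTransform (hφ : IntegrableOn φ (Ioi 0)) :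
    DifferentiableOn ℂ (laplaceTransform φ) {w | 0 < w.re} := by
  intro w₀ hw₀
  have hδ : 0 < w₀.re / 2 := half_pos hw₀
  have hre : ∀ w ∈ Metric.ball w₀ (w₀.re / 2), w₀.re / 2 ≤ w.re := fun w hw => by
    have := (abs_le.1 ((Complex.abs_re_le_norm (w - w₀)).trans (mem_ball_iff_norm.1 hw).le)).1
    rw [Complex.sub_re] at this
    linarith
  have hderiv := hasDerivAt_integral_of_dominated_loc_of_deriv_le
    (F := fun (w : ℂ) (x : ℝ) => (φ x : ℂ) * Complex.exp (-w * x))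
    (F' := fun (w : ℂ) (x : ℝ) => (φ x : ℂ) * (Complex.exp (-w * x) * -x))
    (bound := fun x => |φ x| * (w₀.re / 2)⁻¹) (Metric.ball_mem_nhds w₀ hδ)
    (.of_forall (aestronglyMeasurable_laplace_integrand hφ))
    (integrableOn_laplace_integrand hφ hw₀.le)
    (aestronglyMeasurable_ofReal_mul hφ.aestronglyMeasurable (by fun_prop)) ?_
    (hφ.norm.mul_const _) ?_
  · exact hderiv.2.differentiableAt.differentiableWithinAt
  · refine (ae_restrict_iff' measurableSet_Ioi).2 (.of_forall fun x (hx : 0 < x) w hw => ?_)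
    have hnorm : ‖(φ x : ℂ) * (Complex.exp (-w * x) * -x)‖ = |φ x| * (rexp (-w.re * x) * x) := by
      simp [Complex.norm_exp, abs_of_pos hx]
    rw [hnorm]
    gcongr
    calc rexp (-w.re * x) * x ≤ rexp (-(w₀.re / 2 * x)) * x := by gcongr; nlinarith [hre w hw]
      _ ≤ (w₀.re / 2)⁻¹ := exp_neg_mul_mul_le hδ x
  · refine .of_forall fun x w _ => ?_
    simpa using ((hasDerivAt_id w).neg.mul_const (x : ℂ)).cexp.const_mul (φ x : ℂ)

theorem diffContOnCl_laplaceTransform (hφ : IntegrableOn φ (Ioi 0)) :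
    DiffContOnCl ℂ (laplaceTransform φ) {w | 0 < w.re} :=
  ⟨differentiableOn_laplaceTransform hφ, by
    simpa only [Complex.closure_setOfPred_lt_re] using continuousOn_laplaceTransform hφ⟩

end LaplaceTransform

section Blaschke

variable {G : ℂ → ℂ} {C : ℝ}

theorem norm_sub_eq_norm_add_conj_of_re_eq_zero {w : ℂ} (hw : w.re = 0) (a : ℂ) :
    ‖w - a‖ = ‖w + conj a‖ := by
  rw [← Complex.norm_conj (w + conj a), map_add, Complex.conj_conj, ← norm_neg (w - a)]
  exact congrArg _ (Complex.ext (by simp [hw]) (by simp; ring))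

theorem add_conj_ne_zero {w a : ℂ} (hw : 0 ≤ w.re) (ha : 0 < a.re) : w + conj a ≠ 0 := by
  intro h
  have := congrArg Complex.re h
  simp only [Complex.add_re, Complex.conj_re, Complex.zero_re] at this
  linarith

theorem DiffContOnCl.dslope {U : Set ℂ} (hG : DiffContOnCl ℂ G U) (hU : IsOpen U) {a : ℂ}
    (ha : a ∈ U) : DiffContOnCl ℂ (dslope G a) U := by
  have hnhds : U ∈ 𝓝 a := hU.mem_nhds ha
  refine ⟨(Complex.differentiableOn_dslope hnhds).2 hG.differentiableOn, ?_⟩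
  exact (continuousOn_dslope (mem_of_superset hnhds subset_closure)).2
    ⟨hG.continuousOn, hG.differentiableOn.differentiableAt hnhds⟩

/-- Phragmén–Lindelöf: the Blaschke factor `(w - a) / (w + conj a)` has modulus one on the
imaginary axis and tends to one at infinity. -/
theorem exists_bounded_div_blaschke_factor (hG : DiffContOnCl ℂ G {z | 0 < z.re})
    (hGC : ∀ w, 0 ≤ w.re → ‖G w‖ ≤ C) {a : ℂ} (ha : 0 < a.re) (hGa : G a = 0) :
    ∃ H : ℂ → ℂ, DiffContOnCl ℂ H {z | 0 < z.re} ∧ (∀ w, 0 ≤ w.re → ‖H w‖ ≤ C) ∧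
      ∀ w, G w * (w + conj a) = H w * (w - a) := by
  set H : ℂ → ℂ := fun w => dslope G a w * (w + conj a)
  have hGH : ∀ w, G w * (w + conj a) = H w * (w - a) := fun w => by
    have := sub_smul_dslope G a w
    rw [smul_eq_mul, hGa, sub_zero] at this
    rw [← this]; ring
  have hHd : DiffContOnCl ℂ H {z | 0 < z.re} :=
    (hG.dslope (isOpen_lt continuous_const Complex.continuous_re) ha).smul
      (differentiable_id.add_const _).diffContOnCl
  have hnorm : ∀ w, 0 ≤ w.re → ‖H w‖ * ‖w - a‖ = ‖G w‖ * ‖w + conj a‖ := fun w _ => by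
    rw [← norm_mul, ← norm_mul, hGH]
  set R := 2 * ‖a‖ + 1
  have hfar : ∀ w, 0 ≤ w.re → R ≤ ‖w‖ → ‖H w‖ ≤ 3 * C := by
    intro w hw hR
    have hC : 0 ≤ C := (norm_nonneg _).trans (hGC w hw)
    have hlow : ‖w‖ - ‖a‖ ≤ ‖w - a‖ := norm_sub_norm_le w a
    have hup : ‖w + conj a‖ ≤ ‖w‖ + ‖a‖ := (norm_add_le _ _).trans_eq (by simp)
    have hpos : 0 < ‖w - a‖ := by linarith [norm_nonneg a]
    refine le_of_mul_le_mul_right ?_ hpos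
    rw [hnorm w hw]
    calc ‖G w‖ * ‖w + conj a‖ ≤ C * (‖w‖ + ‖a‖) := mul_le_mul (hGC w hw) hup (norm_nonneg _) hC
      _ ≤ 3 * C * ‖w - a‖ := by nlinarith
  refine ⟨H, hHd, fun z hz => ?_, hGH⟩
  refine PhragmenLindelof.right_half_plane_of_bounded_on_real hHd ⟨0, two_pos, 0, ?_⟩ ?_ ?_ hz
  · refine Asymptotics.IsBigO.of_bound (3 * C) ?_
    rw [eventually_inf_principal]
    filter_upwards [eventually_cobounded_le_norm R] with w hR hw
    simpa using hfar w (le_of_lt hw) hR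
  · refine isBoundedUnder_of_eventually_le (a := 3 * C) ?_
    filter_upwards [eventually_ge_atTop R, eventually_ge_atTop 0] with x hR hx
    exact hfar x (by simpa using hx) (by simpa [abs_of_nonneg hx] using hR)
  · intro y
    have hre : ((y : ℂ) * Complex.I).re = 0 := by simp
    have hne : ‖(y : ℂ) * Complex.I + conj a‖ ≠ 0 := norm_ne_zero_iff.2 (add_conj_ne_zero hre.ge ha)
    have := hnorm _ hre.ge
    rw [norm_sub_eq_norm_add_conj_of_re_eq_zero hre] at this
    rw [mul_right_cancel₀ hne this]
    exact hGC _ hre.ge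

theorem exists_bounded_div_blaschke_product (hG : DiffContOnCl ℂ G {z | 0 < z.re})
    (hGC : ∀ w, 0 ≤ w.re → ‖G w‖ ≤ C) (s : Finset ℂ) (hs : ∀ a ∈ s, 0 < a.re)
    (hGs : ∀ a ∈ s, G a = 0) :
    ∃ H : ℂ → ℂ, DiffContOnCl ℂ H {z | 0 < z.re} ∧ (∀ w, 0 ≤ w.re → ‖H w‖ ≤ C) ∧
      ∀ w, G w * ∏ a ∈ s, (w + conj a) = H w * ∏ a ∈ s, (w - a) := by
  classical
  induction s using Finset.induction_on with
  | empty => exact ⟨G, hG, hGC, by simp⟩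
  | insert b s hb ih =>
    obtain ⟨H, hHd, hHC, hGH⟩ := ih (fun a ha => hs a (Finset.mem_insert_of_mem ha))
      (fun a ha => hGs a (Finset.mem_insert_of_mem ha))
    have hHb : H b = 0 := by
      have hprod : ∏ a ∈ s, (b - a) ≠ 0 :=
        Finset.prod_ne_zero_iff.2 fun a ha => sub_ne_zero.2 (ne_of_mem_of_not_mem ha hb).symm
      have := hGH b
      rw [hGs b (Finset.mem_insert_self b s), zero_mul] at this
      exact (mul_eq_zero.1 this.symm).resolve_right hprod
    obtain ⟨K, hKd, hKC, hHK⟩ :=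
      exists_bounded_div_blaschke_factor hHd hHC (hs b (Finset.mem_insert_self b s)) hHb
    refine ⟨K, hKd, hKC, fun w => ?_⟩
    rw [Finset.prod_insert hb, Finset.prod_insert hb]
    linear_combination (w + conj b) * hGH w + (∏ a ∈ s, (w - a)) * hHK w

theorem norm_mul_prod_add_conj_le (hG : DiffContOnCl ℂ G {z | 0 < z.re})
    (hGC : ∀ w, 0 ≤ w.re → ‖G w‖ ≤ C) (s : Finset ℂ) (hs : ∀ a ∈ s, 0 < a.re)
    (hGs : ∀ a ∈ s, G a = 0) {z : ℂ} (hz : 0 ≤ z.re) :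
    ‖G z‖ * ∏ a ∈ s, ‖z + conj a‖ ≤ C * ∏ a ∈ s, ‖z - a‖ := by
  obtain ⟨H, -, hHC, hGH⟩ := exists_bounded_div_blaschke_product hG hGC s hs hGs
  have := congrArg norm (hGH z)
  simp only [norm_mul, norm_prod] at this
  rw [this]
  gcongr
  exact hHC z hz

theorem norm_le_mul_prod_abs_sub_div_add (hG : DiffContOnCl ℂ G {z | 0 < z.re})
    (hGC : ∀ w, 0 ≤ w.re → ‖G w‖ ≤ C) {a : ℕ → ℝ} (ha : ∀ j, 0 < a j)
    (hinj : Function.Injective a) (hGa : ∀ j, G (a j) = 0) {u : ℝ} (hu : 0 < u) (N : ℕ) :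
    ‖G u‖ ≤ C * ∏ j ∈ Finset.range N, |u - a j| / (u + a j) := by
  have hinjOn : Set.InjOn (fun j => (a j : ℂ)) (Finset.range N) :=
    fun i _ j _ hij => hinj (Complex.ofReal_injective hij)
  have := norm_mul_prod_add_conj_le hG hGC ((Finset.range N).image fun j => (a j : ℂ))
    (by simp [ha]) (by simp [hGa]) (z := u) (by simp [hu.le])
  rw [Finset.prod_image hinjOn, Finset.prod_image hinjOn] at this
  have hadd : ∀ j, ‖(u : ℂ) + conj (a j : ℂ)‖ = u + a j := fun j => by
    rw [Complex.conj_ofReal, ← Complex.ofReal_add, Complex.norm_real, norm_of_nonneg]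
    linarith [ha j]
  have hsub : ∀ j, ‖(u : ℂ) - (a j : ℂ)‖ = |u - a j| := fun j => by
    rw [← Complex.ofReal_sub, Complex.norm_real, Real.norm_eq_abs]
  simp only [hadd, hsub] at this
  rwa [Finset.prod_div_distrib, ← mul_div_assoc,
    le_div_iff₀ (Finset.prod_pos fun j _ => by linarith [ha j])]

end Blaschke

theorem abs_sub_div_add_le_exp {u a m : ℝ} (hu : 0 < u) (hm : 0 < m) (ha : m ≤ a) :
    |u - a| / (u + a) ≤ rexp (-(2 * min u m * m / (u + m) / a)) := by
  set κ := 2 * min u m * m / (u + m)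
  have ha0 : 0 < a := hm.trans_le ha
  have hκ : κ * (u + a) / a ≤ 2 * min u m := by
    rw [div_le_iff₀ ha0, div_mul_eq_mul_div, div_le_iff₀ (by positivity)]
    nlinarith [mul_nonneg (lt_min hu hm).le (mul_nonneg hu.le (sub_nonneg.2 ha))]
  have hmin : 2 * min u m + |u - a| ≤ u + a := by
    rcases le_total u a with h | h
    · rw [abs_of_nonpos (by linarith)]; linarith [min_le_left u m]
    · rw [abs_of_nonneg (by linarith)]; linarith [min_le_right u m]
  calc |u - a| / (u + a) ≤ 1 - κ / a := by
        rw [div_le_iff₀ (by positivity)]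
        have : (1 - κ / a) * (u + a) = u + a - κ * (u + a) / a := by field_simp
        linarith
    _ ≤ rexp (-(κ / a)) := by linarith [add_one_le_exp (-(κ / a))]

theorem tendsto_prod_abs_sub_div_add_atTop_nhds_zero {a : ℕ → ℝ} {m u : ℝ} (hm : 0 < m)
    (ha : ∀ j, m ≤ a j) (hdiv : ¬Summable fun j => 1 / a j) (hu : 0 < u) :
    Tendsto (fun N => ∏ j ∈ Finset.range N, |u - a j| / (u + a j)) atTop (𝓝 0) := by
  set κ := 2 * min u m * m / (u + m)
  have hκ : 0 < κ := by have := lt_min hu hm; positivity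
  have ha0 : ∀ j, 0 < a j := fun j => hm.trans_le (ha j)
  have hsum : Tendsto (fun N => ∑ j ∈ Finset.range N, κ / a j) atTop atTop := by
    refine (not_summable_iff_tendsto_nat_atTop_of_nonneg fun j => (div_pos hκ (ha0 j)).le).1 ?_
    simpa only [mul_one_div] using (summable_mul_left_iff hκ.ne').not.2 hdiv
  refine tendsto_of_tendsto_of_tendsto_of_le_of_le tendsto_const_nhds
    (tendsto_exp_atBot.comp (tendsto_neg_atTop_atBot.comp hsum))
    (fun N => Finset.prod_nonneg fun j _ => div_nonneg (abs_nonneg _) (by linarith [ha0 j]))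
    (fun N => ?_)
  calc ∏ j ∈ Finset.range N, |u - a j| / (u + a j)
      ≤ ∏ j ∈ Finset.range N, rexp (-(κ / a j)) :=
        Finset.prod_le_prod (fun j _ => div_nonneg (abs_nonneg _) (by linarith [ha0 j]))
          fun j _ => abs_sub_div_add_le_exp hu hm (ha j)
    _ = rexp (-∑ j ∈ Finset.range N, κ / a j) := by
        rw [← exp_sum, Finset.sum_neg_distrib]

theorem integral_mul_exp_eq_zero_of_muntz {φ : ℝ → ℝ} (hφ : IntegrableOn φ (Ioi 0))
    {a : ℕ → ℝ} (ha : ∀ j, 0 < a j) (hmono : StrictMono a) (hdiv : ¬Summable fun j => 1 / a j)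
    (hzero : ∀ j, ∫ x in Ioi (0:ℝ), φ x * rexp (-a j * x) = 0) {u : ℝ} (hu : 0 < u) :
    ∫ x in Ioi (0:ℝ), φ x * rexp (-u * x) = 0 := by
  have hbound := norm_le_mul_prod_abs_sub_div_add (diffContOnCl_laplaceTransform hφ)
    (fun w hw => norm_laplaceTransform_le hφ hw) ha hmono.injective
    (fun j => by rw [laplaceTransform_ofReal, hzero, Complex.ofReal_zero]) hu
  have hlim := (tendsto_prod_abs_sub_div_add_atTop_nhds_zero (ha 0)
    (fun j => hmono.monotone (Nat.zero_le j)) hdiv hu).const_mul (∫ x in Ioi (0:ℝ), |φ x|)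
  rw [mul_zero] at hlim
  have := norm_le_zero_iff.1 (ge_of_tendsto hlim (.of_forall hbound))
  rwa [laplaceTransform_ofReal, Complex.ofReal_eq_zero] at this

section Moments

variable {φ : ℝ → ℝ}

theorem integrableOn_mul_comp_exp_neg (hφ : IntegrableOn φ (Ioi 0)) {ψ : ℝ → ℝ}
    (hψ : Continuous ψ) : IntegrableOn (fun x => φ x * ψ (rexp (-x))) (Ioi 0) := by
  obtain ⟨M, hM⟩ := (isCompact_Icc (a := (0:ℝ)) (b := 1)).exists_bound_of_continuousOn
    hψ.continuousOn
  refine hφ.mul_bdd (c := M) (hψ.comp (by fun_prop)).aestronglyMeasurable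
    ((ae_restrict_iff' measurableSet_Ioi).2 (.of_forall fun x hx => hM _ ?_))
  exact ⟨(exp_pos _).le, exp_le_one_iff.2 (neg_nonpos.2 (le_of_lt hx))⟩

theorem integral_mul_eval_exp_neg_eq_zero (hφ : IntegrableOn φ (Ioi 0))
    (h : ∀ k : ℕ, ∫ x in Ioi (0:ℝ), φ x * rexp (-x) ^ k = 0) (p : Polynomial ℝ) :
    ∫ x in Ioi (0:ℝ), φ x * p.eval (rexp (-x)) = 0 := by
  simp_rw [Polynomial.eval_eq_sum_range, Finset.mul_sum, mul_left_comm (φ _)]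
  rw [integral_finsetSum _ fun i _ =>
    (integrableOn_mul_comp_exp_neg hφ (continuous_pow i)).const_mul _]
  exact Finset.sum_eq_zero fun i _ => by rw [integral_const_mul, h i, mul_zero]

theorem integral_mul_comp_exp_neg_eq_zero (hφ : IntegrableOn φ (Ioi 0))
    (h : ∀ k : ℕ, ∫ x in Ioi (0:ℝ), φ x * rexp (-x) ^ k = 0) {ψ : ℝ → ℝ} (hψ : Continuous ψ) :
    ∫ x in Ioi (0:ℝ), φ x * ψ (rexp (-x)) = 0 := by
  set B := ∫ x in Ioi (0:ℝ), |φ x|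
  have hB : 0 ≤ B := setIntegral_nonneg measurableSet_Ioi fun x _ => abs_nonneg (φ x)
  refine abs_nonpos_iff.1 (le_of_forall_pos_le_add fun ε hε => ?_)
  obtain ⟨p, hp⟩ := exists_polynomial_near_of_continuousOn 0 1 ψ hψ.continuousOn
    (ε / (B + 1)) (by positivity)
  have hpoly := integral_mul_eval_exp_neg_eq_zero hφ h p
  have hψp : ∫ x in Ioi (0:ℝ), φ x * ψ (rexp (-x))
      = ∫ x in Ioi (0:ℝ), φ x * (ψ (rexp (-x)) - p.eval (rexp (-x))) := by
    simp_rw [mul_sub]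
    rw [integral_sub (integrableOn_mul_comp_exp_neg hφ hψ)
      (integrableOn_mul_comp_exp_neg hφ p.continuous), hpoly, sub_zero]
  have hpt : ∀ᵐ x ∂volume.restrict (Ioi (0:ℝ)),
      ‖φ x * (ψ (rexp (-x)) - p.eval (rexp (-x)))‖ ≤ |φ x| * (ε / (B + 1)) := by
    refine (ae_restrict_iff' measurableSet_Ioi).2 (.of_forall fun x hx => ?_)
    rw [norm_mul, Real.norm_eq_abs, Real.norm_eq_abs, abs_sub_comm]
    gcongr
    exact (hp _ ⟨(exp_pos _).le, exp_le_one_iff.2 (neg_nonpos.2 (le_of_lt hx))⟩).le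
  calc |∫ x in Ioi (0:ℝ), φ x * ψ (rexp (-x))|
      ≤ ∫ x in Ioi (0:ℝ), |φ x| * (ε / (B + 1)) := by
        rw [hψp, ← Real.norm_eq_abs]
        exact norm_integral_le_of_norm_le (hφ.norm.mul_const _) hpt
    _ = B * ε / (B + 1) := by rw [integral_mul_const, mul_div_assoc]
    _ ≤ 0 + ε := by
        rw [zero_add, div_le_iff₀ (by positivity)]
        nlinarith

theorem exists_continuous_comp_exp_neg_eq {g : ℝ → ℝ} (hg : Continuous g)
    (hgs : HasCompactSupport g) : ∃ ψ : ℝ → ℝ, Continuous ψ ∧ ∀ x, ψ (rexp (-x)) = g x := by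
  obtain ⟨M, hM⟩ := hgs.isCompact.bddAbove
  set ψ : ℝ → ℝ := fun t => if 0 < t then g (-log t) else 0
  have hψ0 : ∀ t < rexp (-M), ψ t = 0 := fun t ht => by
    by_cases h : 0 < t
    · refine (if_pos h).trans (image_eq_zero_of_notMem_tsupport fun hmem => ?_)
      have := (log_lt_iff_lt_exp h).2 ht
      linarith [hM hmem]
    · exact if_neg h
  refine ⟨ψ, continuous_iff_continuousAt.2 fun t => ?_, fun x => by simp [ψ, exp_pos]⟩
  rcases lt_or_ge t (rexp (-M)) with ht | ht
  · refine (continuousAt_const (y := (0:ℝ))).congr ?_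
    filter_upwards [Iio_mem_nhds ht] with s hs using (hψ0 s hs).symm
  · have ht0 : 0 < t := (exp_pos _).trans_le ht
    refine (hg.continuousAt.comp (continuousAt_log ht0.ne').neg).congr ?_
    filter_upwards [Ioi_mem_nhds ht0] with s hs
    exact (if_pos hs).symm

theorem ae_eq_zero_of_integral_mul_exp_neg_pow_eq_zero (hφ : IntegrableOn φ (Ioi 0))
    (h : ∀ k : ℕ, ∫ x in Ioi (0:ℝ), φ x * rexp (-x) ^ k = 0) :
    φ =ᵐ[volume.restrict (Ioi 0)] 0 := by
  refine (ae_restrict_iff' measurableSet_Ioi).2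
    (isOpen_Ioi.ae_eq_zero_of_integral_contDiff_smul_eq_zero hφ.locallyIntegrableOn ?_)
  intro g hg hgs hsupp
  obtain ⟨ψ, hψ, hψg⟩ := exists_continuous_comp_exp_neg_eq hg.continuous hgs
  rw [← setIntegral_eq_integral_of_forall_compl_eq_zero fun x hx => by
    rw [image_eq_zero_of_notMem_tsupport fun h => hx (hsupp h), zero_smul]]
  simp_rw [smul_eq_mul, ← hψg, mul_comm (ψ _)]
  exact integral_mul_comp_exp_neg_eq_zero hφ h hψ

end Moments

theorem ae_eq_zero_of_integral_mul_exp_eq_zero_of_muntz {φ : ℝ → ℝ} (hφ : IntegrableOn φ (Ioi 0))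
    {a : ℕ → ℝ} (ha : ∀ j, 0 < a j) (hmono : StrictMono a) (hdiv : ¬Summable fun j => 1 / a j)
    (hzero : ∀ j, ∫ x in Ioi (0:ℝ), φ x * rexp (-a j * x) = 0) :
    φ =ᵐ[volume.restrict (Ioi 0)] 0 := by
  have hφexp : IntegrableOn (fun x => φ x * rexp (-x)) (Ioi 0) :=
    integrableOn_mul_comp_exp_neg hφ continuous_id
  have hmoments : ∀ k : ℕ, ∫ x in Ioi (0:ℝ), φ x * rexp (-x) * rexp (-x) ^ k = 0 := fun k => by
    have hk : ∀ x, φ x * rexp (-x) * rexp (-x) ^ k = φ x * rexp (-(k + 1 : ℝ) * x) := fun x => by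
      rw [mul_assoc, ← exp_nat_mul, ← exp_add]
      ring_nf
    simp_rw [hk]
    exact integral_mul_exp_eq_zero_of_muntz hφ ha hmono hdiv hzero (by positivity)
  filter_upwards [ae_eq_zero_of_integral_mul_exp_neg_pow_eq_zero hφexp hmoments] with x hx
  exact (mul_eq_zero.1 hx).resolve_right (exp_ne_zero _)

theorem laplace_eq_on_muntz_sequence_general
    (f g : ℝ → ℝ)
    (n : ℕ → ℝ) (hpos : ∀ j, 0 < n j) (hmono : StrictMono n)
    (hdiv : ¬ Summable (fun j => 1 / n j))
    (hfint : ∀ j, IntegrableOn (fun x => f x * Real.exp (-(n j) * x)) (Ioi (0:ℝ)))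
    (hgint : ∀ j, IntegrableOn (fun x => g x * Real.exp (-(n j) * x)) (Ioi (0:ℝ)))
    (h : ∀ j, ∫ x in Ioi (0:ℝ), f x * Real.exp (-(n j) * x)
            = ∫ x in Ioi (0:ℝ), g x * Real.exp (-(n j) * x)) :
    f =ᵐ[volume.restrict (Ioi (0:ℝ))] g := by
  set φ : ℝ → ℝ := fun x => (f x - g x) * rexp (-n 0 * x)
  have hφ : ∀ s x, φ x * rexp (-(s - n 0) * x) = f x * rexp (-s * x) - g x * rexp (-s * x) :=
    fun s x => by
      simp only [φ]
      rw [mul_assoc, ← exp_add]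
      ring_nf
  have hφint : IntegrableOn φ (Ioi 0) := by
    refine ((hfint 0).sub (hgint 0)).congr (ae_of_all _ fun x => ?_)
    simp only [φ, Pi.sub_apply]
    ring
  have hzero : ∀ j, ∫ x in Ioi (0:ℝ), φ x * rexp (-(n (j + 1) - n 0) * x) = 0 := fun j => by
    simp_rw [hφ]
    rw [integral_sub (hfint _) (hgint _), h, sub_self]
  have hshift : ∀ j, 0 < n (j + 1) - n 0 := fun j => sub_pos.2 (hmono j.succ_pos)
  have hdiv' : ¬Summable fun j => 1 / (n (j + 1) - n 0) := fun hs =>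
    hdiv <| (summable_nat_add_iff 1).1 <| hs.of_nonneg_of_le
      (fun j => (one_div_pos.2 (hpos _)).le)
      (fun j => one_div_le_one_div_of_le (hshift j) (by linarith [hpos 0]))
  filter_upwards [ae_eq_zero_of_integral_mul_exp_eq_zero_of_muntz hφint hshift
    (fun i j hij => sub_lt_sub_right (hmono (Nat.succ_lt_succ hij)) _) hdiv' hzero] with x hx
  exact sub_eq_zero.1 ((mul_eq_zero.1 hx).resolve_right (exp_ne_zero _))

theorem laplace_eq_on_muntz_sequence
    (f g : ℝ → ℝ) (hf : Measurable f) (hg : Measurable g)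
    (n : ℕ → ℝ) (hpos : ∀ j, 0 < n j) (hmono : StrictMono n)
    (hdiv : ¬ Summable (fun j => 1 / n j))
    (hfint : ∀ j, IntegrableOn (fun x => f x * Real.exp (-(n j) * x)) (Ioi (0:ℝ)))
    (hgint : ∀ j, IntegrableOn (fun x => g x * Real.exp (-(n j) * x)) (Ioi (0:ℝ)))
    (h : ∀ j, ∫ x in Ioi (0:ℝ), f x * Real.exp (-(n j) * x)
            = ∫ x in Ioi (0:ℝ), g x * Real.exp (-(n j) * x)) :
    f =ᵐ[volume.restrict (Ioi (0:ℝ))] g :=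
  laplace_eq_on_muntz_sequence_general f g n hpos hmono hdiv hfint hgint h
end

section
/- Let X₁ and X₂ be nonnegative random variables with distribution functions F₁ and F₂, and let (m_i) be a strictly increasing sequence of positive real numbers with ∑ 1/m_i = ∞. If E[exp(-m_i X₁)] = E[exp(-m_i X₂)] for all i, then F₁ = F₂. -/
/-!
Write `Y = exp (-X) ∈ (0, 1]`, so that `E[exp (-s X)] = E[Y ^ s] = mgf X (-s)`.

If `m` is unbounded, we use a quantitative Müntz theorem: for distinct positive exponents `l k`
and `s ∉ range l`, the power `y ^ s` is approximated uniformly on `(0, 1]` by combinations of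
`y ^ l 0, …, y ^ l (N - 1)` with error at most `∏ |s - l k| / l k`. The approximants come from
iterating `muntzOperator b f y = y ^ b ∫_y^1 f(t) t^(-1-b) dt`, which sends `y ^ a` to
`(y ^ a - y ^ b) / (b - a)` and shrinks sup norms by the factor `1 / b`. Since `∑ 1 / m i = ∞`,
the product tends to `0`, so the Laplace transforms agree at every `s > 0`.

If `m` is bounded it converges to some `L > 0`; the two moment generating functions are analytic
on `(-∞, 0)` and agree on the sequence `-m i → -L`, hence everywhere on `(-∞, 0)`.

In both cases `Y₁` and `Y₂` have the same integer moments; being supported in `[0, 1]`, their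
laws coincide by the Weierstrass approximation theorem, and so do the distribution functions.
-/

open MeasureTheory ProbabilityTheory Real Set Filter Topology BoundedContinuousFunction

noncomputable def muntzOperator (b : ℝ) (f : ℝ → ℝ) (y : ℝ) : ℝ :=
  y ^ b * ∫ t in y..1, f t * t ^ (-1 - b)

lemma pos_of_mem_uIcc_one {y t : ℝ} (hy : 0 < y) (ht : t ∈ uIcc y 1) : 0 < t :=
  (lt_min hy one_pos).trans_le ht.1

lemma muntzOperator_rpow {a b y : ℝ} (hy : 0 < y) (hab : a ≠ b) :
    muntzOperator b (· ^ a) y = (y ^ a - y ^ b) / (b - a) := by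
  have hmul : EqOn (fun t => t ^ a * t ^ (-1 - b)) (· ^ (a - 1 - b)) (uIcc y 1) := fun t ht => by
    simp only [← rpow_add (pos_of_mem_uIcc_one hy ht)]
    ring_nf
  have h0 : (0 : ℝ) ∉ uIcc y 1 := fun h => (pos_of_mem_uIcc_one hy h).ne rfl
  have hpow : y ^ b * y ^ (a - b) = y ^ a := by rw [← rpow_add hy]; ring_nf
  have hne : a - b ≠ 0 := sub_ne_zero.2 hab
  rw [muntzOperator, intervalIntegral.integral_congr hmul,
    integral_rpow (Or.inr ⟨fun h => hab (by linarith), h0⟩),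
    show a - 1 - b + 1 = a - b by ring, one_rpow]
  field_simp
  linear_combination (a - b) * hpow

lemma abs_muntzOperator_le {b y M : ℝ} {f : ℝ → ℝ} (hb : 0 < b) (hy : y ∈ Ioc 0 1) (hM : 0 ≤ M)
    (hf : ∀ t ∈ Ioc y 1, |f t| ≤ M) : |muntzOperator b f y| ≤ M / b := by
  have hyb : 0 < y ^ b := rpow_pos_of_pos hy.1 b
  have hint : IntervalIntegrable (fun t => M * t ^ (-1 - b)) volume y 1 :=
    (intervalIntegral.intervalIntegrable_rpow
      (Or.inr fun h => (pos_of_mem_uIcc_one hy.1 h).ne rfl)).const_mul M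
  have hbound : ‖∫ t in y..1, f t * t ^ (-1 - b)‖ ≤ ∫ t in y..1, M * t ^ (-1 - b) :=
    intervalIntegral.norm_integral_le_of_norm_le hy.2 (ae_of_all _ fun t ht => by
      rw [norm_mul, norm_of_nonneg (rpow_nonneg (hy.1.trans ht.1).le _)]
      exact mul_le_mul_of_nonneg_right (hf t ht) (rpow_nonneg (hy.1.trans ht.1).le _)) hint
  have hone : muntzOperator b (· ^ (0 : ℝ)) y = (1 - y ^ b) / b := by
    rw [muntzOperator_rpow hy.1 hb.ne, rpow_zero, sub_zero]
  calc |muntzOperator b f y| = y ^ b * ‖∫ t in y..1, f t * t ^ (-1 - b)‖ := by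
        rw [muntzOperator, abs_mul, abs_of_pos hyb, Real.norm_eq_abs]
    _ ≤ y ^ b * ∫ t in y..1, M * t ^ (-1 - b) := mul_le_mul_of_nonneg_left hbound hyb.le
    _ = M * muntzOperator b (· ^ (0 : ℝ)) y := by
        simp only [muntzOperator, rpow_zero, one_mul, intervalIntegral.integral_const_mul]; ring
    _ ≤ M / b := by
        rw [hone, mul_div_assoc']
        exact div_le_div_of_nonneg_right (mul_le_of_le_one_right hM (by linarith)) hb.le

lemma muntzOperator_rpow_sub_sum {s b y : ℝ} {l c : ℕ → ℝ} {N : ℕ} (hy : 0 < y) :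
    muntzOperator b (fun t => t ^ s - ∑ k ∈ Finset.range N, c k * t ^ l k) y
      = muntzOperator b (· ^ s) y - ∑ k ∈ Finset.range N, c k * muntzOperator b (· ^ l k) y := by
  have hint : ∀ a : ℝ, IntervalIntegrable (fun t => t ^ a * t ^ (-1 - b)) volume y 1 := fun a =>
    ContinuousOn.intervalIntegrable fun t ht =>
      have ht0 : t ≠ 0 := (pos_of_mem_uIcc_one hy ht).ne'
      ((continuousAt_id.rpow_const (Or.inl ht0)).mul
        (continuousAt_id.rpow_const (Or.inl ht0))).continuousWithinAt
  have hterm : ∀ k ∈ Finset.range N,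
      IntervalIntegrable (fun t => c k * (t ^ l k * t ^ (-1 - b))) volume y 1 :=
    fun k _ => (hint (l k)).const_mul (c k)
  simp only [muntzOperator, sub_mul, Finset.sum_mul, mul_assoc]
  have hsum : IntervalIntegrable
      (fun t => ∑ k ∈ Finset.range N, c k * (t ^ l k * t ^ (-1 - b))) volume y 1 := by
    simpa only [Finset.sum_fn] using IntervalIntegrable.sum _ hterm
  rw [intervalIntegral.integral_sub (hint s) hsum, intervalIntegral.integral_finsetSum hterm]
  simp only [intervalIntegral.integral_const_mul, mul_sub, Finset.mul_sum, mul_left_comm]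

theorem exists_sum_rpow_approx {l : ℕ → ℝ} {s : ℝ} (hl : ∀ k, 0 < l k)
    (hinj : Function.Injective l) (hs : 0 ≤ s) (hsl : ∀ k, l k ≠ s) (N : ℕ) :
    ∃ c : ℕ → ℝ, ∀ y ∈ Ioc (0 : ℝ) 1,
      |y ^ s - ∑ k ∈ Finset.range N, c k * y ^ l k| ≤ ∏ k ∈ Finset.range N, |s - l k| / l k := by
  induction N with
  | zero =>
    refine ⟨0, fun y hy => ?_⟩
    simpa [abs_of_nonneg (rpow_nonneg hy.1.le s)] using rpow_le_one hy.1.le hy.2 hs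
  | succ N ih =>
    obtain ⟨c, hc⟩ := ih
    set B := ∏ k ∈ Finset.range N, |s - l k| / l k
    have hB : 0 ≤ B := Finset.prod_nonneg fun k _ => div_nonneg (abs_nonneg _) (hl k).le
    -- The next error is `(l N - s) * muntzOperator (l N)` of the current one; `r k` is the factor
    -- by which this rescales the coefficient of `y ^ l k`.
    set r : ℕ → ℝ := fun k => (l N - s) / (l N - l k)
    refine ⟨fun k => if k = N then 1 - ∑ j ∈ Finset.range N, c j * r j else c k * r k,
      fun y hy => ?_⟩
    set e : ℝ → ℝ := fun t => t ^ s - ∑ k ∈ Finset.range N, c k * t ^ l k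
    have hnext : y ^ s - ∑ k ∈ Finset.range (N + 1),
          (if k = N then 1 - ∑ j ∈ Finset.range N, c j * r j else c k * r k) * y ^ l k
        = (l N - s) * muntzOperator (l N) e y := by
      have hlift : ∑ k ∈ Finset.range N, c k * muntzOperator (l N) (· ^ l k) y
          = ∑ k ∈ Finset.range N, c k * ((y ^ l k - y ^ l N) / (l N - l k)) :=
        Finset.sum_congr rfl fun k hk => by
          rw [muntzOperator_rpow hy.1 (hinj.ne (Finset.mem_range.1 hk).ne)]
      have hcoef : ∑ k ∈ Finset.range N,
            (if k = N then 1 - ∑ j ∈ Finset.range N, c j * r j else c k * r k) * y ^ l k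
          = ∑ k ∈ Finset.range N, c k * r k * y ^ l k :=
        Finset.sum_congr rfl fun k hk => by rw [if_neg (Finset.mem_range.1 hk).ne]
      have hfirst : (l N - s) * ((y ^ s - y ^ l N) / (l N - s)) = y ^ s - y ^ l N :=
        mul_div_cancel₀ _ (sub_ne_zero.2 (hsl N))
      have hrest : (l N - s) * ∑ k ∈ Finset.range N, c k * ((y ^ l k - y ^ l N) / (l N - l k))
          = ∑ k ∈ Finset.range N, c k * r k * y ^ l k
            - (∑ k ∈ Finset.range N, c k * r k) * y ^ l N := by
        rw [Finset.mul_sum, Finset.sum_mul, ← Finset.sum_sub_distrib]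
        exact Finset.sum_congr rfl fun k _ => by ring
      rw [muntzOperator_rpow_sub_sum hy.1, muntzOperator_rpow hy.1 (hsl N).symm, hlift,
        Finset.sum_range_succ, if_pos rfl, hcoef, mul_sub, hfirst, hrest]
      ring
    rw [hnext, abs_mul, Finset.prod_range_succ, abs_sub_comm]
    calc |s - l N| * |muntzOperator (l N) e y| ≤ |s - l N| * (B / l N) :=
          mul_le_mul_of_nonneg_left (abs_muntzOperator_le (hl N) hy hB fun t ht =>
            hc t ⟨hy.1.trans ht.1, ht.2⟩) (abs_nonneg _)
      _ = B * (|s - l N| / l N) := by ring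

theorem tendsto_prod_one_sub_of_not_summable {a : ℕ → ℝ} (h0 : ∀ k, 0 ≤ a k) (h1 : ∀ k, a k ≤ 1)
    (h : ¬ Summable a) : Tendsto (fun N => ∏ k ∈ Finset.range N, (1 - a k)) atTop (𝓝 0) := by
  have hsum : Tendsto (fun N => ∑ k ∈ Finset.range N, a k) atTop atTop :=
    (not_summable_iff_tendsto_nat_atTop_of_nonneg h0).1 h
  refine squeeze_zero (fun N => Finset.prod_nonneg fun k _ => sub_nonneg.2 (h1 k)) (fun N => ?_)
    (tendsto_exp_atBot.comp (tendsto_neg_atTop_atBot.comp hsum))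
  calc ∏ k ∈ Finset.range N, (1 - a k) ≤ ∏ k ∈ Finset.range N, exp (-a k) :=
        Finset.prod_le_prod (fun k _ => sub_nonneg.2 (h1 k)) fun k _ => one_sub_le_exp_neg _
    _ = exp (-∑ k ∈ Finset.range N, a k) := by rw [← exp_sum, Finset.sum_neg_distrib]

theorem tendsto_prod_abs_sub_div_of_tendsto_atTop {l : ℕ → ℝ} {s : ℝ} (hl : ∀ k, 0 < l k)
    (htop : Tendsto l atTop atTop) (hdiv : ¬ Summable fun k => 1 / l k) (hs : 0 < s) :
    Tendsto (fun N => ∏ k ∈ Finset.range N, |s - l k| / l k) atTop (𝓝 0) := by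
  obtain ⟨K, hK⟩ := eventually_atTop.1 (htop.eventually_ge_atTop s)
  have htail : ∀ k, |s - l (K + k)| / l (K + k) = 1 - s / l (K + k) := fun k => by
    rw [abs_of_nonpos (sub_nonpos.2 (hK _ (Nat.le_add_right K k))), neg_sub,
      sub_div, div_self (hl _).ne']
  have hdiv' : ¬ Summable fun k => s / l (K + k) := fun hsum => hdiv <|
    (summable_nat_add_iff K).1 <| (hsum.mul_left s⁻¹).congr fun k => by
      rw [add_comm, ← mul_div_assoc, inv_mul_cancel₀ hs.ne']
  rw [← tendsto_add_atTop_iff_nat K]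
  simp only [add_comm _ K, Finset.prod_range_add, htail]
  simpa only [mul_zero] using (tendsto_prod_one_sub_of_not_summable
    (fun k => div_nonneg hs.le (hl _).le)
    (fun k => (div_le_one (hl _)).2 (hK _ (Nat.le_add_right K k))) hdiv').const_mul
    (∏ k ∈ Finset.range K, |s - l k| / l k)

lemma dist_setIntegral_Icc_le {ρ : Measure ℝ} [IsFiniteMeasure ρ] {a b δ : ℝ} {f g : ℝ → ℝ}
    (hf : Continuous f) (hg : Continuous g) (h : ∀ x ∈ Icc a b, |f x - g x| ≤ δ) :
    dist (∫ x in Icc a b, f x ∂ρ) (∫ x in Icc a b, g x ∂ρ) ≤ δ * ρ.real (Icc a b) := by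
  rw [dist_eq_norm, ← integral_sub hf.integrableOn_Icc hg.integrableOn_Icc]
  have hpt : ∀ᵐ x ∂ρ.restrict (Icc a b), ‖f x - g x‖ ≤ δ :=
    (ae_restrict_mem measurableSet_Icc).mono fun x hx => h x hx
  simpa using norm_integral_le_of_norm_le_const hpt

theorem MeasureTheory.Measure.ext_of_forall_integral_pow_eq {μ ν : Measure ℝ} [IsFiniteMeasure μ]
    [IsFiniteMeasure ν] {a b : ℝ} (hμ : ∀ᵐ x ∂μ, x ∈ Icc a b) (hν : ∀ᵐ x ∂ν, x ∈ Icc a b)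
    (h : ∀ n : ℕ, ∫ x, x ^ n ∂μ = ∫ x, x ^ n ∂ν) : μ = ν := by
  rw [← Measure.restrict_eq_self_of_ae_mem hμ, ← Measure.restrict_eq_self_of_ae_mem hν] at h ⊢
  have hint : ∀ (ρ : Measure ℝ) [IsFiniteMeasure ρ] (p : Polynomial ℝ),
      IntegrableOn (fun x => p.eval x) (Icc a b) ρ := fun ρ _ p => p.continuous.integrableOn_Icc
  have hpoly : ∀ p : Polynomial ℝ,
      ∫ x in Icc a b, p.eval x ∂μ = ∫ x in Icc a b, p.eval x ∂ν := by
    intro p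
    induction p using Polynomial.induction_on' with
    | add p q hp hq =>
      simp only [Polynomial.eval_add]
      rw [integral_add (hint μ p) (hint μ q), integral_add (hint ν p) (hint ν q), hp, hq]
    | monomial n c =>
      simp only [Polynomial.eval_monomial, integral_const_mul, h n]
  have hclose : ∀ (f : ℝ →ᵇ ℝ) (δ : ℝ), 0 < δ →
      dist (∫ x in Icc a b, f x ∂μ) (∫ x in Icc a b, f x ∂ν)
        ≤ δ * (μ.real (Icc a b) + ν.real (Icc a b)) := by
    intro f δ hδ
    obtain ⟨p, hp⟩ := exists_polynomial_near_of_continuousOn a b f f.continuous.continuousOn δ hδ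
    have happrox : ∀ (ρ : Measure ℝ) [IsFiniteMeasure ρ],
        dist (∫ x in Icc a b, f x ∂ρ) (∫ x in Icc a b, p.eval x ∂ρ) ≤ δ * ρ.real (Icc a b) :=
      fun ρ _ => dist_setIntegral_Icc_le f.continuous p.continuous fun x hx => by
        rw [abs_sub_comm]; exact (hp x hx).le
    calc dist (∫ x in Icc a b, f x ∂μ) (∫ x in Icc a b, f x ∂ν)
        ≤ dist (∫ x in Icc a b, f x ∂μ) (∫ x in Icc a b, p.eval x ∂μ)
          + dist (∫ x in Icc a b, p.eval x ∂μ) (∫ x in Icc a b, f x ∂ν) := dist_triangle _ _ _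
      _ = dist (∫ x in Icc a b, f x ∂μ) (∫ x in Icc a b, p.eval x ∂μ)
          + dist (∫ x in Icc a b, f x ∂ν) (∫ x in Icc a b, p.eval x ∂ν) := by
        rw [dist_comm (∫ x in Icc a b, p.eval x ∂μ), hpoly p]
      _ ≤ δ * (μ.real (Icc a b) + ν.real (Icc a b)) := by
        linarith [happrox μ, happrox ν]
  refine ext_of_forall_integral_eq_of_IsFiniteMeasure fun f => eq_of_forall_dist_le fun ε hε => ?_
  set M := μ.real (Icc a b) + ν.real (Icc a b)
  have hM : 0 ≤ M := by positivity
  calc _ ≤ ε / (M + 1) * M := hclose f _ (by positivity)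
    _ ≤ ε := by
      rw [div_mul_eq_mul_div, div_le_iff₀ (by positivity)]
      nlinarith

section Mgf

variable {Ω Ω' : Type*} {mΩ : MeasurableSpace Ω} {mΩ' : MeasurableSpace Ω'}
  {μ : Measure Ω} {μ' : Measure Ω'} {X : Ω → ℝ} {Y : Ω' → ℝ}

lemma integrable_exp_mul_of_nonpos [IsFiniteMeasure μ] (hX : AEMeasurable X μ) (hX0 : 0 ≤ᵐ[μ] X)
    {t : ℝ} (ht : t ≤ 0) : Integrable (fun ω => exp (t * X ω)) μ :=
  .of_bound (hX.const_mul t).exp.aestronglyMeasurable 1 <| hX0.mono fun ω hω => by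
    rw [norm_of_nonneg (exp_pos _).le, exp_le_one_iff]
    exact mul_nonpos_of_nonpos_of_nonneg ht hω

lemma Iio_subset_interior_integrableExpSet [IsFiniteMeasure μ] (hX : AEMeasurable X μ)
    (hX0 : 0 ≤ᵐ[μ] X) : Iio 0 ⊆ interior (integrableExpSet X μ) := by
  rw [← interior_Iic]
  exact interior_mono fun t ht => integrable_exp_mul_of_nonpos hX hX0 ht

lemma abs_mgf_neg_sub_sum_le [IsProbabilityMeasure μ] (hX : AEMeasurable X μ) (hX0 : 0 ≤ᵐ[μ] X)
    {s ε : ℝ} {l c : ℕ → ℝ} {N : ℕ} (hs : 0 ≤ s) (hl : ∀ k, 0 ≤ l k)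
    (hc : ∀ y ∈ Ioc (0 : ℝ) 1, |y ^ s - ∑ k ∈ Finset.range N, c k * y ^ l k| ≤ ε) :
    |mgf X μ (-s) - ∑ k ∈ Finset.range N, c k * mgf X μ (-l k)| ≤ ε := by
  have hint : ∀ a, 0 ≤ a → Integrable (fun ω => exp (-a * X ω)) μ := fun a ha =>
    integrable_exp_mul_of_nonpos hX hX0 (neg_nonpos.2 ha)
  have hterm : ∀ k ∈ Finset.range N, Integrable (fun ω => c k * exp (-l k * X ω)) μ :=
    fun k _ => (hint _ (hl k)).const_mul (c k)
  have hdiff : mgf X μ (-s) - ∑ k ∈ Finset.range N, c k * mgf X μ (-l k)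
      = ∫ ω, (exp (-s * X ω) - ∑ k ∈ Finset.range N, c k * exp (-l k * X ω)) ∂μ := by
    rw [integral_sub (hint s hs) (integrable_finsetSum _ hterm), integral_finsetSum _ hterm]
    simp only [mgf, integral_const_mul]
  have hpt : ∀ᵐ ω ∂μ,
      ‖exp (-s * X ω) - ∑ k ∈ Finset.range N, c k * exp (-l k * X ω)‖ ≤ ε := hX0.mono fun ω hω => by
    have hy : exp (-X ω) ∈ Ioc (0 : ℝ) 1 := ⟨exp_pos _, exp_le_one_iff.2 (neg_nonpos.2 hω)⟩
    have hpow : ∀ a, exp (-X ω) ^ a = exp (-a * X ω) := fun a => by rw [← exp_mul]; ring_nf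
    simpa only [hpow, norm_eq_abs] using hc _ hy
  rw [hdiff, ← norm_eq_abs]
  simpa using norm_integral_le_of_norm_le_const hpt

theorem mgf_neg_eq_of_tendsto_prod [IsProbabilityMeasure μ] [IsProbabilityMeasure μ']
    (hX : AEMeasurable X μ) (hY : AEMeasurable Y μ') (hX0 : 0 ≤ᵐ[μ] X) (hY0 : 0 ≤ᵐ[μ'] Y)
    {l : ℕ → ℝ} (hl : ∀ k, 0 < l k) (hinj : Function.Injective l)
    (hmgf : ∀ k, mgf X μ (-l k) = mgf Y μ' (-l k)) {s : ℝ} (hs : 0 ≤ s)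
    (hprod : Tendsto (fun N => ∏ k ∈ Finset.range N, |s - l k| / l k) atTop (𝓝 0)) :
    mgf X μ (-s) = mgf Y μ' (-s) := by
  by_cases hsl : ∃ k, l k = s
  · obtain ⟨k, rfl⟩ := hsl
    exact hmgf k
  push Not at hsl
  refine eq_of_forall_dist_le fun ε hε => ?_
  obtain ⟨N, hN⟩ := (hprod.eventually (gt_mem_nhds (half_pos hε))).exists
  obtain ⟨c, hc⟩ := exists_sum_rpow_approx hl hinj hs hsl N
  have hc' : ∀ y ∈ Ioc (0 : ℝ) 1, |y ^ s - ∑ k ∈ Finset.range N, c k * y ^ l k| ≤ ε / 2 :=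
    fun y hy => (hc y hy).trans hN.le
  have hX' := abs_mgf_neg_sub_sum_le hX hX0 hs (fun k => (hl k).le) hc'
  have hY' := abs_mgf_neg_sub_sum_le hY hY0 hs (fun k => (hl k).le) hc'
  simp only [hmgf] at hX'
  rw [Real.dist_eq]
  linarith [abs_sub_le (mgf X μ (-s)) (∑ k ∈ Finset.range N, c k * mgf Y μ' (-l k))
    (mgf Y μ' (-s)), abs_sub_comm (mgf Y μ' (-s)) (∑ k ∈ Finset.range N, c k * mgf Y μ' (-l k))]

theorem eqOn_mgf_Iio_of_strictMono_tendsto [IsFiniteMeasure μ] [IsFiniteMeasure μ']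
    (hX : AEMeasurable X μ) (hY : AEMeasurable Y μ') (hX0 : 0 ≤ᵐ[μ] X) (hY0 : 0 ≤ᵐ[μ'] Y)
    {m : ℕ → ℝ} {L : ℝ} (hm0 : 0 < m 0) (hm : StrictMono m) (hL : Tendsto m atTop (𝓝 L))
    (h : ∀ i, mgf X μ (-m i) = mgf Y μ' (-m i)) : EqOn (mgf X μ) (mgf Y μ') (Iio 0) := by
  have hmL : ∀ i, m i < L := fun i =>
    (hm (Nat.lt_succ_self i)).trans_le (hm.monotone.ge_of_tendsto hL _)
  have hlim : Tendsto (fun i => -m i) atTop (𝓝[≠] (-L)) :=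
    tendsto_nhdsWithin_iff.2 ⟨hL.neg, Eventually.of_forall fun i => by simpa using (hmL i).ne⟩
  exact (analyticOnNhd_mgf.mono (Iio_subset_interior_integrableExpSet hX hX0))
    |>.eqOn_of_preconnected_of_frequently_eq
      (analyticOnNhd_mgf.mono (Iio_subset_interior_integrableExpSet hY hY0))
      (convex_Iio 0).isPreconnected (neg_lt_zero.2 (hm0.trans (hmL 0)))
      (hlim.frequently (Frequently.of_forall h))

theorem eqOn_mgf_Iio_of_not_summable [IsProbabilityMeasure μ] [IsProbabilityMeasure μ']
    (hX : AEMeasurable X μ) (hY : AEMeasurable Y μ') (hX0 : 0 ≤ᵐ[μ] X) (hY0 : 0 ≤ᵐ[μ'] Y)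
    {m : ℕ → ℝ} (hpos : ∀ i, 0 < m i) (hm : StrictMono m)
    (hdiv : ¬ Summable fun i => 1 / m i) (h : ∀ i, mgf X μ (-m i) = mgf Y μ' (-m i)) :
    EqOn (mgf X μ) (mgf Y μ') (Iio 0) := by
  by_cases hbdd : BddAbove (range m)
  · exact eqOn_mgf_Iio_of_strictMono_tendsto hX hY hX0 hY0 (hpos 0) hm
      (tendsto_atTop_ciSup hm.monotone hbdd) h
  · intro t ht
    simpa using mgf_neg_eq_of_tendsto_prod hX hY hX0 hY0 hpos hm.injective h (neg_nonneg.2 ht.le)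
      (tendsto_prod_abs_sub_div_of_tendsto_atTop hpos
        (tendsto_atTop_atTop_of_monotone' hm.monotone hbdd) hdiv (neg_pos.2 ht))

lemma ae_mem_Icc_map_exp_neg (hX : AEMeasurable X μ) (hX0 : 0 ≤ᵐ[μ] X) :
    ∀ᵐ y ∂μ.map (fun ω => exp (-X ω)), y ∈ Icc (0 : ℝ) 1 :=
  (ae_map_iff hX.neg.exp measurableSet_Icc).2 <| hX0.mono fun _ hω =>
    ⟨(exp_pos _).le, exp_le_one_iff.2 (neg_nonpos.2 hω)⟩

lemma integral_pow_map_exp_neg (hX : AEMeasurable X μ) (n : ℕ) :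
    ∫ y, y ^ n ∂μ.map (fun ω => exp (-X ω)) = mgf X μ (-n) := by
  rw [integral_map (by fun_prop) (continuous_pow n).aestronglyMeasurable]
  simp only [mgf, ← exp_nat_mul]
  ring_nf

lemma measure_le_eq_map_exp_neg (hX : Measurable X) (x : ℝ) :
    μ {ω | X ω ≤ x} = μ.map (fun ω => exp (-X ω)) (Ici (exp (-x))) := by
  rw [Measure.map_apply (by fun_prop) measurableSet_Ici]
  congr 1
  ext ω
  simp

end Mgf

theorem cdf_unique_of_laplace_on_muntz_sequence
    {Ω₁ Ω₂ : Type*} [MeasurableSpace Ω₁] [MeasurableSpace Ω₂]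
    (ℙ₁ : Measure Ω₁) (ℙ₂ : Measure Ω₂)
    [IsProbabilityMeasure ℙ₁] [IsProbabilityMeasure ℙ₂]
    (X₁ : Ω₁ → ℝ) (X₂ : Ω₂ → ℝ) (hX₁ : Measurable X₁) (hX₂ : Measurable X₂)
    (hX₁0 : ∀ ω, 0 ≤ X₁ ω) (hX₂0 : ∀ ω, 0 ≤ X₂ ω)
    (m : ℕ → ℝ) (hpos : ∀ i, 0 < m i) (hmono : StrictMono m)
    (hdiv : ¬ Summable (fun i => 1 / m i))
    (h : ∀ i, ∫ ω, Real.exp (-(m i) * X₁ ω) ∂ℙ₁ = ∫ ω, Real.exp (-(m i) * X₂ ω) ∂ℙ₂) :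
    ∀ x : ℝ, ℙ₁ {ω | X₁ ω ≤ x} = ℙ₂ {ω | X₂ ω ≤ x} := by
  have hmgf : EqOn (mgf X₁ ℙ₁) (mgf X₂ ℙ₂) (Iio 0) :=
    eqOn_mgf_Iio_of_not_summable hX₁.aemeasurable hX₂.aemeasurable (ae_of_all _ hX₁0)
      (ae_of_all _ hX₂0) hpos hmono hdiv h
  have hlaw : ℙ₁.map (fun ω => exp (-X₁ ω)) = ℙ₂.map (fun ω => exp (-X₂ ω)) := by
    refine Measure.ext_of_forall_integral_pow_eq (ae_mem_Icc_map_exp_neg hX₁.aemeasurable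
      (ae_of_all _ hX₁0)) (ae_mem_Icc_map_exp_neg hX₂.aemeasurable (ae_of_all _ hX₂0)) fun n => ?_
    rw [integral_pow_map_exp_neg hX₁.aemeasurable, integral_pow_map_exp_neg hX₂.aemeasurable]
    rcases n.eq_zero_or_pos with rfl | hn
    · simp only [Nat.cast_zero, neg_zero, mgf_zero]
    · exact hmgf (mem_Iio.2 (neg_lt_zero.2 (Nat.cast_pos.2 hn)))
  intro x
  rw [measure_le_eq_map_exp_neg hX₁, measure_le_eq_map_exp_neg hX₂, hlaw]
end

section
/- Any joint distribution H of two nonnegative random variables X, Y is uniquely determined by the values E[exp(-iX - jY)] for positive integers i, j; that is, if two such joint distributions have equal bivariate Laplace–Stieltjes transforms at all lattice points (i,j) ∈ ℕ² with i,j ≥ 1, then they coincide. -/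
/-!
Push both joint laws forward to `ℝ≥0 × ℝ≥0`. There the Laplace values at lattice points are
the mixed moments `∫ f ^ i * g ^ j`, `i, j ≥ 1`, of the bounded continuous functions
`f = e^{-x}`, `g = e^{-y}`, which together separate points. Weighting the laws by the positive
density `f * g` turns these into all mixed moments `i, j ≥ 0`, so by Stone–Weierstrass the
weighted finite measures agree; dividing the density back out recovers the laws.
-/

open MeasureTheory Real BoundedContinuousFunction
open scoped NNReal ENNReal

namespace MeasureTheory

variable {E : Type*} [MeasurableSpace E] [TopologicalSpace E] [PolishSpace E] [BorelSpace E]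
  {P P' : Measure E} [IsFiniteMeasure P] [IsFiniteMeasure P'] {f g : E →ᵇ ℝ}

theorem ext_of_integral_pow_mul_pow_eq
    (hfg : ∀ x y, f x = f y → g x = g y → x = y)
    (h : ∀ i j : ℕ, ∫ x, f x ^ i * g x ^ j ∂P = ∫ x, f x ^ i * g x ^ j ∂P') : P = P' := by
  refine ext_of_forall_mem_subalgebra_integral_eq_of_polish
    (A := StarAlgebra.adjoin ℝ {f, g}) ?_ ?_
  · intro x y hxy
    by_cases hf : f x = f y
    · refine ⟨g, ⟨g, ⟨g, ?_, rfl⟩, rfl⟩, fun hg => hxy (hfg x y hf hg)⟩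
      exact StarAlgebra.subset_adjoin ℝ _ (by simp)
    · refine ⟨f, ⟨f, ⟨f, ?_, rfl⟩, rfl⟩, hf⟩
      exact StarAlgebra.subset_adjoin ℝ _ (by simp)
  · intro φ hφ
    have hstar : star ({f, g} : Set (E →ᵇ ℝ)) = {f, g} := by
      ext φ; simp [show star φ = φ by ext; simp]
    replace hφ : φ ∈ Subalgebra.toSubmodule (Algebra.adjoin ℝ {f, g}) := by
      rw [← Set.union_self {f, g}]
      nth_rw 2 [← hstar]
      exact hφ
    rw [Algebra.adjoin_eq_span] at hφ
    induction hφ using Submodule.span_induction with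
    | mem m hm =>
      obtain ⟨i, j, rfl⟩ := (Submonoid.mem_closure_pair f g m).mp hm
      simpa using h i j
    | zero => simp
    | add u v _ _ hu hv =>
      simp only [coe_add, Pi.add_apply]
      rw [integral_add (u.integrable P) (v.integrable P),
        integral_add (u.integrable P') (v.integrable P'), hu, hv]
    | smul c u _ hu =>
      simp only [coe_smul, smul_eq_mul]
      rw [integral_const_mul, integral_const_mul, hu]

theorem ext_of_integral_pow_mul_pow_eq_of_pos (hf : ∀ x, 0 < f x) (hg : ∀ x, 0 < g x)
    (hfg : ∀ x y, f x = f y → g x = g y → x = y)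
    (h : ∀ i j : ℕ, 1 ≤ i → 1 ≤ j →
      ∫ x, f x ^ i * g x ^ j ∂P = ∫ x, f x ^ i * g x ^ j ∂P') : P = P' := by
  set w : E → ℝ≥0∞ := fun x => ENNReal.ofReal (f x * g x)
  have hw : Measurable w := ENNReal.measurable_ofReal.comp (f * g).continuous.measurable
  have : ∀ μ : Measure E, [IsFiniteMeasure μ] → IsFiniteMeasure (μ.withDensity w) :=
    fun μ _ => isFiniteMeasure_withDensity_ofReal ((f * g).integrable μ).hasFiniteIntegral
  have hweighted : P.withDensity w = P'.withDensity w := by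
    refine ext_of_integral_pow_mul_pow_eq hfg fun i j => ?_
    have shift : ∀ μ : Measure E, ∫ x, f x ^ i * g x ^ j ∂μ.withDensity w
        = ∫ x, f x ^ (i + 1) * g x ^ (j + 1) ∂μ := fun μ => by
      rw [integral_withDensity_eq_integral_toReal_smul hw
        (ae_of_all _ fun _ => ENNReal.ofReal_lt_top)]
      congr 1 with x
      rw [ENNReal.toReal_ofReal (mul_pos (hf x) (hg x)).le, smul_eq_mul]
      ring
    rw [shift, shift]
    exact h _ _ (Nat.le_add_left 1 i) (Nat.le_add_left 1 j)
  have hunweight : ∀ μ : Measure E, (μ.withDensity w).withDensity (fun x => (w x)⁻¹) = μ :=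
    fun μ => withDensity_inv_same hw
      (ae_of_all _ fun x => by simp [w, hf x, hg x]) (ae_of_all _ fun _ => ENNReal.ofReal_ne_top)
  rw [← hunweight P, hweighted, hunweight]

end MeasureTheory

namespace NNReal

noncomputable def expNeg : ℝ≥0 →ᵇ ℝ :=
  .ofNormedAddCommGroup (fun t => exp (-(t : ℝ))) (by fun_prop) 1 fun t => by simp

lemma expNeg_injective : Function.Injective expNeg := fun s t hst => by
  simpa [expNeg] using hst

lemma integral_expNeg_pow_mul_pow_map {Ω : Type*} [MeasurableSpace Ω] (μ : Measure Ω)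
    {T : Ω → ℝ≥0 × ℝ≥0} (hT : Measurable T) (i j : ℕ) :
    ∫ p, expNeg.compContinuous .fst p ^ i * expNeg.compContinuous .snd p ^ j ∂μ.map T
      = ∫ ω, exp (-(i : ℝ) * (T ω).1 - (j : ℝ) * (T ω).2) ∂μ := by
  rw [integral_map hT.aemeasurable (by fun_prop)]
  congr 1 with ω
  change exp (-((T ω).1 : ℝ)) ^ i * exp (-((T ω).2 : ℝ)) ^ j = _
  rw [← exp_nat_mul, ← exp_nat_mul, ← exp_add]
  ring_nf

end NNReal

theorem bivariate_cdf_unique_of_laplace_on_lattice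
    {Ω₁ Ω₂ : Type*} [MeasurableSpace Ω₁] [MeasurableSpace Ω₂]
    (ℙ₁ : Measure Ω₁) (ℙ₂ : Measure Ω₂)
    [IsProbabilityMeasure ℙ₁] [IsProbabilityMeasure ℙ₂]
    (X₁ Y₁ : Ω₁ → ℝ) (X₂ Y₂ : Ω₂ → ℝ)
    (hX₁ : Measurable X₁) (hY₁ : Measurable Y₁)
    (hX₂ : Measurable X₂) (hY₂ : Measurable Y₂)
    (hX₁0 : ∀ ω, 0 ≤ X₁ ω) (hY₁0 : ∀ ω, 0 ≤ Y₁ ω)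
    (hX₂0 : ∀ ω, 0 ≤ X₂ ω) (hY₂0 : ∀ ω, 0 ≤ Y₂ ω)
    (h : ∀ i j : ℕ, 1 ≤ i → 1 ≤ j →
        ∫ ω, Real.exp (-(i : ℝ) * X₁ ω - (j : ℝ) * Y₁ ω) ∂ℙ₁
          = ∫ ω, Real.exp (-(i : ℝ) * X₂ ω - (j : ℝ) * Y₂ ω) ∂ℙ₂) :
    ∀ x y : ℝ, ℙ₁ {ω | X₁ ω ≤ x ∧ Y₁ ω ≤ y} = ℙ₂ {ω | X₂ ω ≤ x ∧ Y₂ ω ≤ y} := by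
  set T₁ : Ω₁ → ℝ≥0 × ℝ≥0 := fun ω => (⟨X₁ ω, hX₁0 ω⟩, ⟨Y₁ ω, hY₁0 ω⟩)
  set T₂ : Ω₂ → ℝ≥0 × ℝ≥0 := fun ω => (⟨X₂ ω, hX₂0 ω⟩, ⟨Y₂ ω, hY₂0 ω⟩)
  have hT₁ : Measurable T₁ := hX₁.subtype_mk.prodMk hY₁.subtype_mk
  have hT₂ : Measurable T₂ := hX₂.subtype_mk.prodMk hY₂.subtype_mk
  have hlaw : ℙ₁.map T₁ = ℙ₂.map T₂ := by
    refine ext_of_integral_pow_mul_pow_eq_of_pos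
      (f := NNReal.expNeg.compContinuous .fst) (g := NNReal.expNeg.compContinuous .snd)
      (fun _ => exp_pos _) (fun _ => exp_pos _)
      (fun _ _ h₁ h₂ => Prod.ext (NNReal.expNeg_injective h₁) (NNReal.expNeg_injective h₂))
      fun i j hi hj => ?_
    rw [NNReal.integral_expNeg_pow_mul_pow_map ℙ₁ hT₁,
      NNReal.integral_expNeg_pow_mul_pow_map ℙ₂ hT₂]
    exact h i j hi hj
  intro x y
  set S : Set (ℝ≥0 × ℝ≥0) := {p | (p.1 : ℝ) ≤ x ∧ (p.2 : ℝ) ≤ y}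
  have hS : MeasurableSet S := by measurability
  calc ℙ₁ {ω | X₁ ω ≤ x ∧ Y₁ ω ≤ y} = ℙ₁.map T₁ S := (Measure.map_apply hT₁ hS).symm
    _ = ℙ₂.map T₂ S := by rw [hlaw]
    _ = ℙ₂ {ω | X₂ ω ≤ x ∧ Y₂ ω ≤ y} := Measure.map_apply hT₂ hS
end

section
/- Let (X,Y) have the bivariate lack-of-memory distribution with joint survival function H̄(x,y) = e^{-θy} F̄(x−y) for x ≥ y ≥ 0 and H̄(x,y) = e^{-θx} Ḡ(y−x) for y ≥ x ≥ 0, where θ > 0. Then for all s, t > 0: E[exp(-sX - tY)] = [(θ+s) E[exp(-sX)] + (θ+t) E[exp(-tY)]]/(θ+s+t) − θ/(θ+s+t). -/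
/-!
Since `1 - exp (-s X) = ∫_{0 < x < X} s e^{-s x} dx`, Fubini turns the expectations of
`1 - e^{-s X}` and of `(1 - e^{-s X}) (1 - e^{-t Y})` into Laplace transforms of the marginal and
of the joint survival functions: `s ∫ e^{-s x} F̄(x) dx` and `s t ∫∫ e^{-s x - t y} H̄(x, y) dx dy`.
Off the null diagonal, the lack-of-memory form of `H̄` splits the double integral into two
pieces; substituting `x = y + u` below the diagonal turns that piece into
`(∫ e^{-s u} F̄(u) du) / (θ + s + t)`, and symmetrically above it. Eliminating the two marginal
transforms from these three identities gives the formula.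
-/

open MeasureTheory Real Set

theorem integral_Ioi_exp_neg_mul {a : ℝ} (ha : 0 < a) (c : ℝ) :
    ∫ x in Ioi c, exp (-a * x) = exp (-a * c) / a := by
  rw [integral_exp_mul_Ioi (neg_neg_of_pos ha) c, neg_div_neg_eq]

theorem mul_integral_Ioo_exp_neg_mul {a c : ℝ} (ha : 0 < a) (hc : 0 ≤ c) :
    a * ∫ x in Ioo 0 c, exp (-a * x) = 1 - exp (-a * c) := by
  rw [← integral_Ioc_eq_integral_Ioo, ← intervalIntegral.integral_of_le hc,
    ← intervalIntegral.integral_Ioi_sub_Ioi (exp_neg_integrableOn_Ioi 0 ha) hc,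
    integral_Ioi_exp_neg_mul ha, integral_Ioi_exp_neg_mul ha]
  field_simp
  simp

theorem integral_Ioi_comp_sub_right {E : Type*} [NormedAddCommGroup E] [NormedSpace ℝ E]
    (f : ℝ → E) (y : ℝ) : ∫ x in Ioi y, f (x - y) = ∫ x in Ioi 0, f x := by
  have := (measurableEmbedding_addRight y).setIntegral_map (μ := volume)
    (fun x => f (x - y)) (Ioi y)
  rw [map_add_right_eq_self] at this
  simpa using this

theorem ae_fst_ne_snd : ∀ᵐ p : ℝ × ℝ, p.1 ≠ p.2 := by
  rw [ae_iff]
  simp only [ne_eq, not_not]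
  rw [Measure.volume_eq_prod,
    Measure.measure_prod_null (measurableSet_eq_fun measurable_fst measurable_snd)]
  exact Filter.Eventually.of_forall fun x => by simp [preimage]

section Convolution

variable {a b C : ℝ} {F : ℝ → ℝ}

theorem integrableOn_indicator_lt_exp_mul_comp_sub (ha : 0 < a) (hb : 0 < b)
    (hF : Measurable F) (hFC : ∀ x, |F x| ≤ C) :
    IntegrableOn ({p : ℝ × ℝ | p.2 < p.1}.indicator
      fun p => exp (-a * p.1) * exp (-b * p.2) * F (p.1 - p.2)) (Ioi 0 ×ˢ Ioi 0) := by
  have hdom : IntegrableOn (fun p : ℝ × ℝ => C * (exp (-a * p.1) * exp (-b * p.2)))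
      (Ioi 0 ×ˢ Ioi 0) := by
    rw [IntegrableOn, Measure.volume_eq_prod, ← Measure.prod_restrict]
    exact ((exp_neg_integrableOn_Ioi 0 ha).mul_prod (exp_neg_integrableOn_Ioi 0 hb)).const_mul C
  refine hdom.mono' ?_ (Filter.Eventually.of_forall fun p => ?_)
  · exact ((by fun_prop : Measurable fun p : ℝ × ℝ =>
      exp (-a * p.1) * exp (-b * p.2) * F (p.1 - p.2)).indicator
        (measurableSet_lt measurable_snd measurable_fst)).aestronglyMeasurable
  · refine (norm_indicator_le_norm_self _ p).trans ?_
    rw [norm_mul, norm_of_nonneg (by positivity), Real.norm_eq_abs, mul_comm]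
    exact mul_le_mul_of_nonneg_right (hFC _) (by positivity)

theorem setIntegral_indicator_lt_exp_mul_comp_sub (ha : 0 < a) (hb : 0 < b)
    (hF : Measurable F) (hFC : ∀ x, |F x| ≤ C) :
    ∫ p in Ioi 0 ×ˢ Ioi 0, {p : ℝ × ℝ | p.2 < p.1}.indicator
        (fun p => exp (-a * p.1) * exp (-b * p.2) * F (p.1 - p.2)) p
      = (∫ u in Ioi 0, exp (-a * u) * F u) / (a + b) := by
  have hint := integrableOn_indicator_lt_exp_mul_comp_sub ha hb hF hFC
  rw [IntegrableOn, Measure.volume_eq_prod, ← Measure.prod_restrict] at hint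
  rw [Measure.volume_eq_prod, ← Measure.prod_restrict, integral_prod_symm _ hint]
  have hinner : ∀ y ∈ Ioi (0 : ℝ), ∫ x in Ioi 0, {p : ℝ × ℝ | p.2 < p.1}.indicator
        (fun p => exp (-a * p.1) * exp (-b * p.2) * F (p.1 - p.2)) (x, y)
      = (∫ u in Ioi 0, exp (-a * u) * F u) * exp (-(a + b) * y) := by
    intro y hy
    have hshift : ∀ x, exp (-a * x) * exp (-b * y) * F (x - y)
        = exp (-(a + b) * y) * (exp (-a * (x - y)) * F (x - y)) := by
      intro x
      rw [← mul_assoc, ← Real.exp_add, ← Real.exp_add]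
      ring_nf
    change ∫ x in Ioi 0, (Ioi y).indicator
      (fun x => exp (-a * x) * exp (-b * y) * F (x - y)) x = _
    rw [setIntegral_indicator measurableSet_Ioi, Ioi_inter_Ioi, max_eq_right (le_of_lt hy)]
    simp_rw [hshift]
    rw [integral_const_mul, integral_Ioi_comp_sub_right (fun u => exp (-a * u) * F u), mul_comm]
  rw [setIntegral_congr_fun measurableSet_Ioi hinner, integral_const_mul,
    integral_Ioi_exp_neg_mul (by positivity), mul_zero, Real.exp_zero, mul_one_div]

end Convolution

theorem integral_one_sub_mul_one_sub {Ω : Type*} [MeasurableSpace Ω] {μ : Measure Ω}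
    [IsProbabilityMeasure μ] {f g : Ω → ℝ}
    (hf : Integrable f μ) (hg : Integrable g μ) (hfg : Integrable (fun ω => f ω * g ω) μ) :
    ∫ ω, (1 - f ω) * (1 - g ω) ∂μ = 1 - ∫ ω, f ω ∂μ - ∫ ω, g ω ∂μ + ∫ ω, f ω * g ω ∂μ := by
  have hexpand : ∀ ω, (1 - f ω) * (1 - g ω) = 1 - f ω - g ω + f ω * g ω := fun ω => by ring
  simp_rw [hexpand]
  rw [integral_add (f := fun ω => 1 - f ω - g ω) (((integrable_const 1).sub hf).sub hg) hfg,
    integral_sub (f := fun ω => 1 - f ω) ((integrable_const 1).sub hf) hg,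
    integral_sub (integrable_const 1) hf]
  simp

section Survival

variable {Ω : Type*} [MeasurableSpace Ω] (μ : Measure Ω) [IsFiniteMeasure μ]

theorem measurable_measureReal_setOf_lt (X : Ω → ℝ) :
    Measurable fun x : ℝ => μ.real {ω | x < X ω} :=
  Antitone.measurable fun _ _ hxy => measureReal_mono fun _ hω => lt_of_le_of_lt hxy hω

theorem integrable_exp_of_nonpos {Z : Ω → ℝ} (hZ : Measurable Z) (hZ0 : ∀ ω, Z ω ≤ 0) :
    Integrable (fun ω => exp (Z ω)) μ :=
  .of_bound hZ.exp.aestronglyMeasurable 1 (ae_of_all _ fun ω => by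
    rw [norm_of_nonneg (exp_pos _).le]
    exact exp_le_one_iff.mpr (hZ0 ω))

theorem integral_mul_measureReal_slice {T : Type*} [MeasurableSpace T] (ν : Measure T) [SFinite ν]
    {f : T → ℝ} (hf : Integrable f ν) {S : Set (Ω × T)} (hS : MeasurableSet S) :
    ∫ t, f t * μ.real {ω | (ω, t) ∈ S} ∂ν = ∫ ω, ∫ t in {t | (ω, t) ∈ S}, f t ∂ν ∂μ := by
  have hint : Integrable (S.indicator fun p => f p.2) (μ.prod ν) :=
    (hf.comp_snd μ).indicator hS
  calc ∫ t, f t * μ.real {ω | (ω, t) ∈ S} ∂ν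
      = ∫ t, ∫ ω, S.indicator (fun p => f p.2) (ω, t) ∂μ ∂ν := by
        congr 1 with t
        rw [mul_comm, ← smul_eq_mul]
        exact (integral_indicator_const _ (measurable_prodMk_right hS)).symm
    _ = ∫ ω, ∫ t, S.indicator (fun p => f p.2) (ω, t) ∂ν ∂μ := by
        rw [← integral_prod_symm _ hint, integral_prod _ hint]
    _ = ∫ ω, ∫ t in {t | (ω, t) ∈ S}, f t ∂ν ∂μ := by
        congr 1 with ω
        exact integral_indicator (measurable_prodMk_left hS)

theorem integral_one_sub_exp_neg_mul {X : Ω → ℝ} (hX : Measurable X) (hX0 : ∀ ω, 0 ≤ X ω)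
    {s : ℝ} (hs : 0 < s) :
    ∫ ω, (1 - exp (-s * X ω)) ∂μ = s * ∫ x in Ioi 0, exp (-s * x) * μ.real {ω | x < X ω} := by
  have hslice : ∫ x in Ioi 0, exp (-s * x) * μ.real {ω | x < X ω}
      = ∫ ω, ∫ x in Iio (X ω), exp (-s * x) ∂volume.restrict (Ioi 0) ∂μ :=
    integral_mul_measureReal_slice μ _ (exp_neg_integrableOn_Ioi 0 hs)
      (S := {p | p.2 < X p.1}) (measurableSet_lt (by fun_prop) (by fun_prop))
  rw [hslice, ← integral_const_mul]
  congr 1 with ω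
  rw [Measure.restrict_restrict measurableSet_Iio, Iio_inter_Ioi,
    mul_integral_Ioo_exp_neg_mul hs (hX0 ω)]

theorem integral_one_sub_exp_neg_mul_mul_one_sub_exp_neg_mul {X Y : Ω → ℝ}
    (hX : Measurable X) (hY : Measurable Y) (hX0 : ∀ ω, 0 ≤ X ω) (hY0 : ∀ ω, 0 ≤ Y ω)
    {s t : ℝ} (hs : 0 < s) (ht : 0 < t) :
    ∫ ω, (1 - exp (-s * X ω)) * (1 - exp (-t * Y ω)) ∂μ
      = s * t * ∫ p in Ioi 0 ×ˢ Ioi 0,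
          exp (-s * p.1) * exp (-t * p.2) * μ.real {ω | p.1 < X ω ∧ p.2 < Y ω} := by
  have hint : IntegrableOn (fun p : ℝ × ℝ => exp (-s * p.1) * exp (-t * p.2)) (Ioi 0 ×ˢ Ioi 0) := by
    rw [IntegrableOn, Measure.volume_eq_prod, ← Measure.prod_restrict]
    exact (exp_neg_integrableOn_Ioi 0 hs).mul_prod (exp_neg_integrableOn_Ioi 0 ht)
  have hslice : ∫ p in Ioi 0 ×ˢ Ioi 0,
        exp (-s * p.1) * exp (-t * p.2) * μ.real {ω | p.1 < X ω ∧ p.2 < Y ω}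
      = ∫ ω, ∫ p in Iio (X ω) ×ˢ Iio (Y ω),
          exp (-s * p.1) * exp (-t * p.2) ∂volume.restrict (Ioi 0 ×ˢ Ioi 0) ∂μ :=
    integral_mul_measureReal_slice μ _ hint (S := {p | p.2.1 < X p.1 ∧ p.2.2 < Y p.1})
      (by measurability)
  rw [hslice, ← integral_const_mul]
  congr 1 with ω
  rw [Measure.restrict_restrict (measurableSet_Iio.prod measurableSet_Iio), prod_inter_prod,
    Iio_inter_Ioi, Iio_inter_Ioi, Measure.volume_eq_prod,
    setIntegral_prod_mul (fun x => exp (-s * x)) (fun y => exp (-t * y)),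
    ← mul_integral_Ioo_exp_neg_mul hs (hX0 ω),
    ← mul_integral_Ioo_exp_neg_mul ht (hY0 ω)]
  ring

theorem setIntegral_exp_mul_joint_survival_of_lack_of_memory {X Y : Ω → ℝ} {θ s t : ℝ}
    (hθ : 0 ≤ θ) (hs : 0 < s) (ht : 0 < t)
    (h1 : ∀ x y : ℝ, 0 ≤ y → y ≤ x →
      μ.real {ω | x < X ω ∧ y < Y ω} = exp (-θ * y) * μ.real {ω | x - y < X ω})
    (h2 : ∀ x y : ℝ, 0 ≤ x → x ≤ y →
      μ.real {ω | x < X ω ∧ y < Y ω} = exp (-θ * x) * μ.real {ω | y - x < Y ω}) :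
    ∫ p in Ioi 0 ×ˢ Ioi 0, exp (-s * p.1) * exp (-t * p.2) * μ.real {ω | p.1 < X ω ∧ p.2 < Y ω}
      = ((∫ x in Ioi 0, exp (-s * x) * μ.real {ω | x < X ω})
          + ∫ y in Ioi 0, exp (-t * y) * μ.real {ω | y < Y ω}) / (θ + s + t) := by
  have hbdd : ∀ A : Set Ω, |μ.real A| ≤ μ.real univ := fun A => by
    rw [abs_of_nonneg measureReal_nonneg]; exact measureReal_mono (subset_univ A)
  set F := fun x : ℝ => μ.real {ω | x < X ω}
  set G := fun y : ℝ => μ.real {ω | y < Y ω}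
  have hF := measurable_measureReal_setOf_lt μ X
  have hG := measurable_measureReal_setOf_lt μ Y
  set K₁ := {p : ℝ × ℝ | p.2 < p.1}.indicator
    fun p => exp (-s * p.1) * exp (-(t + θ) * p.2) * F (p.1 - p.2)
  set K₂ := {p : ℝ × ℝ | p.2 < p.1}.indicator
    fun p => exp (-t * p.1) * exp (-(s + θ) * p.2) * G (p.1 - p.2)
  have hK₁ : IntegrableOn K₁ (Ioi 0 ×ˢ Ioi 0) :=
    integrableOn_indicator_lt_exp_mul_comp_sub hs (by positivity) hF fun _ => hbdd _
  have hK₂ : IntegrableOn (fun p => K₂ p.swap) (Ioi 0 ×ˢ Ioi 0) := by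
    rw [Measure.volume_eq_prod]
    exact (integrableOn_indicator_lt_exp_mul_comp_sub ht (by positivity) hG
      fun _ => hbdd _).swap
  have hsplit : ∀ᵐ p ∂volume.restrict (Ioi 0 ×ˢ Ioi 0),
      exp (-s * p.1) * exp (-t * p.2) * μ.real {ω | p.1 < X ω ∧ p.2 < Y ω}
        = K₁ p + K₂ p.swap := by
    filter_upwards [ae_restrict_mem (measurableSet_Ioi.prod measurableSet_Ioi),
      ae_restrict_of_ae ae_fst_ne_snd] with p ⟨hx, hy⟩ hne
    rcases hne.lt_or_gt with hlt | hgt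
    · have hK₁ : K₁ p = 0 :=
        indicator_of_notMem (show p ∉ {q : ℝ × ℝ | q.2 < q.1} from hlt.not_gt) _
      have hK₂ : K₂ p.swap = exp (-t * p.2) * exp (-(s + θ) * p.1) * G (p.2 - p.1) :=
        indicator_of_mem (show p.swap ∈ {q : ℝ × ℝ | q.2 < q.1} from hlt) _
      rw [hK₁, hK₂, zero_add, h2 p.1 p.2 hx.le hlt.le, neg_add, add_mul, exp_add]
      ring
    · have hK₁ : K₁ p = exp (-s * p.1) * exp (-(t + θ) * p.2) * F (p.1 - p.2) :=
        indicator_of_mem (show p ∈ {q : ℝ × ℝ | q.2 < q.1} from hgt) _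
      have hK₂ : K₂ p.swap = 0 :=
        indicator_of_notMem (show p.swap ∉ {q : ℝ × ℝ | q.2 < q.1} from hgt.not_gt) _
      rw [hK₁, hK₂, add_zero, h1 p.1 p.2 hy.le hgt.le, neg_add, add_mul, exp_add]
      ring
  rw [integral_congr_ae hsplit, integral_add hK₁ hK₂,
    setIntegral_indicator_lt_exp_mul_comp_sub hs (by positivity) hF fun _ => hbdd _,
    Measure.volume_eq_prod, setIntegral_prod_swap (Ioi 0) (Ioi 0) K₂, ← Measure.volume_eq_prod,
    setIntegral_indicator_lt_exp_mul_comp_sub ht (by positivity) hG fun _ => hbdd _,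
    show s + (t + θ) = θ + s + t by ring, show t + (s + θ) = θ + s + t by ring, add_div]

end Survival

theorem blm_laplace_stieltjes_transform
    {Ω : Type*} [MeasurableSpace Ω] (ℙ : Measure Ω) [IsProbabilityMeasure ℙ]
    (X Y : Ω → ℝ) (hX : Measurable X) (hY : Measurable Y)
    (hX0 : ∀ ω, 0 < X ω) (hY0 : ∀ ω, 0 < Y ω)
    (θ : ℝ) (hθ : 0 < θ)
    (h1 : ∀ x y : ℝ, 0 ≤ y → y ≤ x →
      (ℙ {ω | x < X ω ∧ y < Y ω}).toReal
        = Real.exp (-θ * y) * (ℙ {ω | x - y < X ω}).toReal)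
    (h2 : ∀ x y : ℝ, 0 ≤ x → x ≤ y →
      (ℙ {ω | x < X ω ∧ y < Y ω}).toReal
        = Real.exp (-θ * x) * (ℙ {ω | y - x < Y ω}).toReal) :
    ∀ s t : ℝ, 0 < s → 0 < t →
      ∫ ω, Real.exp (-s * X ω - t * Y ω) ∂ℙ
        = ((θ + s) * (∫ ω, Real.exp (-s * X ω) ∂ℙ)
            + (θ + t) * (∫ ω, Real.exp (-t * Y ω) ∂ℙ)) / (θ + s + t)
          - θ / (θ + s + t) := by

  intro s t hs ht
  simp only [← measureReal_def] at h1 h2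
  have hφX := integrable_exp_of_nonpos ℙ (Z := fun ω => -s * X ω) (by fun_prop)
    fun ω => by nlinarith [hX0 ω]
  have hφY := integrable_exp_of_nonpos ℙ (Z := fun ω => -t * Y ω) (by fun_prop)
    fun ω => by nlinarith [hY0 ω]
  have hφXY := integrable_exp_of_nonpos ℙ (Z := fun ω => -s * X ω - t * Y ω) (by fun_prop)
    fun ω => by nlinarith [hX0 ω, hY0 ω]
  have hexp : ∀ ω, exp (-s * X ω - t * Y ω) = exp (-s * X ω) * exp (-t * Y ω) := fun ω => by
    rw [sub_eq_add_neg, ← neg_mul, Real.exp_add]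
  simp_rw [hexp] at hφXY ⊢
  have hXY := integral_one_sub_exp_neg_mul_mul_one_sub_exp_neg_mul ℙ hX hY
    (fun ω => (hX0 ω).le) (fun ω => (hY0 ω).le) hs ht
  rw [integral_one_sub_mul_one_sub hφX hφY hφXY,
    setIntegral_exp_mul_joint_survival_of_lack_of_memory ℙ hθ.le hs ht h1 h2] at hXY
  have hX1 := integral_one_sub_exp_neg_mul ℙ hX (fun ω => (hX0 ω).le) hs
  have hY1 := integral_one_sub_exp_neg_mul ℙ hY (fun ω => (hY0 ω).le) ht
  rw [integral_sub (integrable_const 1) hφX, integral_const, probReal_univ, one_smul] at hX1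
  rw [integral_sub (integrable_const 1) hφY, integral_const, probReal_univ, one_smul] at hY1
  rw [mul_div_assoc', eq_div_iff (by positivity)] at hXY
  rw [← sub_div, eq_div_iff (by positivity)]
  linear_combination hXY - t * hX1 - s * hY1
end
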